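/- arXiv:2209.02767 — 6 statements merged into one kernel-verified Lean document; each statement's English description precedes it below -/
import Mathlib

section
/- Let N = (P,T,F) be a continuous Petri net, U ⊆ T, and m_src, m_tgt ∈ (ℝ≥0)^P. If m_tgt is not reachable from m_src in the restricted net N_U (i.e., ¬(m_src →* m_tgt) in N_U), then there exists a locally closed bi-separator φ for (m_src, m_tgt) with respect to N_U; moreover, φ can be taken of the form φ = φ₁ ∨ ⋯ ∨ φₙ where n ≤ 2|U| + 1 and each clause φᵢ contains at most 2|U| + 1 atomic propositions. -/
/-- A continuous Petri net `N = (P, T, F)` with places `P`, transitions `T`,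
and flow matrices `F₋, F₊ : P × T → ℕ`. -/
structure PetriNet (P T : Type*) where
  Fminus : P → T → ℕ
  Fplus : P → T → ℕ

namespace PetriNet

variable {P T : Type*}

/-- `pre(t)`: the column of `F₋` associated to transition `t`, as a real vector. -/
def pre (N : PetriNet P T) (t : T) : P → ℝ := fun p => (N.Fminus p t : ℝ)

/-- `post(t)`: the column of `F₊` associated to transition `t`, as a real vector. -/
def post (N : PetriNet P T) (t : T) : P → ℝ := fun p => (N.Fplus p t : ℝ)

/-- The transpose net `N^T := (P, T, (F₊, F₋))`. -/
def transpose (N : PetriNet P T) : PetriNet P T := ⟨N.Fplus, N.Fminus⟩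

/-- `m →(αt) m'` : transition `t` is `α`-fired (α > 0) from `m`, leading to `m'`. -/
def fire (N : PetriNet P T) (t : T) (α : ℝ) (m m' : P → ℝ) : Prop :=
  0 < α ∧ (∀ p, α * N.pre t p ≤ m p) ∧
    ∀ p, m' p = m p + α * (N.post t p - N.pre t p)

/-- Firing a sequence `σ = α₁t₁ ⋯ αₙtₙ` (a list of (amount, transition) pairs)
from `m` to `m'`. -/
def fireSeq (N : PetriNet P T) : List (ℝ × T) → (P → ℝ) → (P → ℝ) → Prop
  | [], m, m' => m = m'
  | (α, t) :: σ, m, m' => ∃ m₁, N.fire t α m m₁ ∧ N.fireSeq σ m₁ m'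

/-- The support of a firing sequence: the set of transitions occurring in it. -/
def seqSupport (σ : List (ℝ × T)) : Set T := {t | ∃ α : ℝ, (α, t) ∈ σ}

end PetriNet

namespace PetriNet

variable {P T : Type*}

/-- `m → m'` in the restricted net `N_U` : some transition of `U` can be fired. -/
def stepOn (N : PetriNet P T) (U : Set T) (m m' : P → ℝ) : Prop :=
  ∃ t ∈ U, ∃ α : ℝ, N.fire t α m m'

end PetriNet

open PetriNet

/-- An atomic proposition `a·m + a'·m' ∼ b` over pairs of markings, with `∼ ∈ {≤, <}`
(`strict = true` means `<`). -/
structure Atom (P : Type*) where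
  a : P → ℝ
  a' : P → ℝ
  b : ℝ
  strict : Bool

namespace Atom

variable {P : Type*} [Fintype P]

/-- Solutions of an atomic proposition, as a set of pairs of markings. -/
def sol (ψ : Atom P) : Set ((P → ℝ) × (P → ℝ)) :=
  {mm | 0 ≤ mm.1 ∧ 0 ≤ mm.2 ∧
    (if ψ.strict then (∑ p, ψ.a p * mm.1 p) + (∑ p, ψ.a' p * mm.2 p) < ψ.b
      else (∑ p, ψ.a p * mm.1 p) + (∑ p, ψ.a' p * mm.2 p) ≤ ψ.b)}

/-- The transpose of an atomic proposition swaps the two marking arguments. -/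
def transpose (ψ : Atom P) : Atom P := ⟨ψ.a', ψ.a, ψ.b, ψ.strict⟩

/-- `ψ ⇝_t ψ'` : `ψ` `t`-implies `ψ'`. -/
def timplies {T : Type*} (N : PetriNet P T) (t : T) (ψ ψ' : Atom P) : Prop :=
  ∀ (m m' m'' : P → ℝ) (α : ℝ),
    (m, m') ∈ ψ.sol → N.fire t α m' m'' → (m, m'') ∈ ψ'.sol

end Atom

/-- A clause (finite conjunction of atomic propositions) `t`-implies another clause. -/
def Clause.timplies {P T : Type*} [Fintype P] (N : PetriNet P T) (t : T)
    (c c' : List (Atom P)) : Prop :=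
  ∀ ψ' ∈ c', ∃ ψ ∈ c, Atom.timplies N t ψ ψ'

/-- Solutions of a DNF formula (disjunction of clauses). -/
def Formula.sol {P : Type*} [Fintype P] (φ : List (List (Atom P))) :
    Set ((P → ℝ) × (P → ℝ)) :=
  {mm | ∃ c ∈ φ, ∀ ψ ∈ c, mm ∈ ψ.sol}

/-- `φ` is locally closed w.r.t. the restricted net `N_U`. -/
def LocallyClosedOn {P T : Type*} [Fintype P] (N : PetriNet P T) (U : Set T)
    (φ : List (List (Atom P))) : Prop :=
  (∀ c ∈ φ, ∀ ψ ∈ c, ψ.b = 0) ∧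
  (∀ t ∈ U, ∀ c ∈ φ, ∃ c' ∈ φ, Clause.timplies N t c c') ∧
  (∀ t ∈ U, ∀ c ∈ φ, ∃ c' ∈ φ,
    Clause.timplies N.transpose t (c.map Atom.transpose) (c'.map Atom.transpose))

namespace BiSep

open PetriNet

noncomputable section
open Classical

set_option linter.unusedSectionVars false

variable {P T : Type*} [Fintype P]

/-- dot product of two real vectors over a fintype. -/
def dot {Q : Type*} [Fintype Q] (r m : Q → ℝ) : ℝ := ∑ q, r q * m q

lemma dot_smul_right {Q : Type*} [Fintype Q] (r v : Q → ℝ) (c : ℝ) :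
    dot r (fun q => c * v q) = c * dot r v := by
  simp [dot, Finset.mul_sum]; apply Finset.sum_congr rfl; intros; ring

lemma dot_sub {Q : Type*} [Fintype Q] (r v w : Q → ℝ) :
    dot r (fun q => v q - w q) = dot r v - dot r w := by
  simp [dot, mul_sub, Finset.sum_sub_distrib]

lemma dot_add {Q : Type*} [Fintype Q] (r v w : Q → ℝ) :
    dot r (fun q => v q + w q) = dot r v + dot r w := by
  simp [dot, mul_add, Finset.sum_add_distrib]

/-- net effect of a transition. -/
def PetriNet.delta (N : PetriNet P T) (t : T) : P → ℝ := fun p => N.post t p - N.pre t p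

lemma delta_transpose (N : PetriNet P T) (t : T) (p : P) :
    PetriNet.delta N.transpose t p = - PetriNet.delta N t p := by
  simp only [PetriNet.delta, PetriNet.transpose, PetriNet.pre, PetriNet.post]; ring

lemma fire_nonneg {N : PetriNet P T} {t : T} {α : ℝ} {m m' : P → ℝ}
    (h : N.fire t α m m') : 0 ≤ m' := by
  intro p
  show (0:ℝ) ≤ m' p
  have h1 := h.2.1 p
  have hpost : (0:ℝ) ≤ N.post t p := by simp only [PetriNet.post]; positivity
  have hα : (0:ℝ) ≤ α := le_of_lt h.1
  rw [h.2.2 p]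
  nlinarith [mul_nonneg hα hpost]

lemma dot_fire {N : PetriNet P T} {t : T} {α : ℝ} {m m' : P → ℝ}
    (h : N.fire t α m m') (r : P → ℝ) :
    dot r m' = dot r m + α * dot r (PetriNet.delta N t) := by
  have e : m' = fun p => m p + α * PetriNet.delta N t p := by
    funext p; rw [h.2.2 p]; rfl
  rw [e, dot_add]
  congr 1
  rw [dot_smul_right]

lemma fire_transpose {N : PetriNet P T} {t : T} {α : ℝ} {m m' : P → ℝ} :
    N.transpose.fire t α m m' ↔ N.fire t α m' m := by
  simp only [PetriNet.fire, PetriNet.transpose, PetriNet.pre, PetriNet.post]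
  constructor
  · rintro ⟨ha, hb, hc⟩
    exact ⟨ha, fun p => by have := hb p; have := hc p; nlinarith,
      fun p => by have := hc p; linarith⟩
  · rintro ⟨ha, hb, hc⟩
    exact ⟨ha, fun p => by have := hb p; have := hc p; nlinarith,
      fun p => by have := hc p; linarith⟩

/-- Reachability in the restricted net. -/
abbrev Reach (N : PetriNet P T) (U : Set T) : (P → ℝ) → (P → ℝ) → Prop :=
  Relation.ReflTransGen (N.stepOn U)

lemma reach_congr {N : PetriNet P T} {U : Set T} {a b a' b' : P → ℝ}
    (h : Reach N U a b) (ha : a = a') (hb : b = b') : Reach N U a' b' :=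
  ha ▸ hb ▸ h

lemma reach_nonneg {N : PetriNet P T} {U : Set T} {m m' : P → ℝ}
    (h : Reach N U m m') (hm : 0 ≤ m) : 0 ≤ m' := by
  induction h with
  | refl => exact hm
  | tail _ hstep ih =>
    obtain ⟨t, _, α, hf⟩ := hstep
    exact fire_nonneg hf

lemma reach_transpose {N : PetriNet P T} {U : Set T} {m m' : P → ℝ} :
    Reach N.transpose U m m' ↔ Reach N U m' m := by
  have key : ∀ (M : PetriNet P T) (a b : P → ℝ),
      M.transpose.stepOn U a b ↔ M.stepOn U b a := by
    intro M a b
    constructor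
    · rintro ⟨t, ht, α, hf⟩; exact ⟨t, ht, α, fire_transpose.mp hf⟩
    · rintro ⟨t, ht, α, hf⟩; exact ⟨t, ht, α, fire_transpose.mpr hf⟩
  constructor
  · intro h
    have h' := Relation.ReflTransGen.swap _ _ h
    refine Relation.ReflTransGen.mono ?_ _ _ h'
    intro a b hab
    exact (key N b a).mp hab
  · intro h
    have h' : Relation.ReflTransGen (Function.swap (N.transpose.stepOn U)) m' m := by
      refine Relation.ReflTransGen.mono ?_ _ _ h
      intro a b hab
      exact (key N b a).mpr hab
    exact Relation.ReflTransGen.swap _ _ h'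

lemma reach_scale {N : PetriNet P T} {U : Set T} {m m' : P → ℝ}
    (h : Reach N U m m') {c : ℝ} (hc : 0 < c) :
    Reach N U (fun p => c * m p) (fun p => c * m' p) := by
  induction h with
  | refl => exact Relation.ReflTransGen.refl
  | tail _ hstep ih =>
    refine ih.tail ?_
    obtain ⟨t, ht, α, hf⟩ := hstep
    refine ⟨t, ht, c * α, mul_pos hc hf.1, fun p => ?_, fun p => ?_⟩
    · dsimp only
      nlinarith [mul_le_mul_of_nonneg_left (hf.2.1 p) hc.le]
    · dsimp only
      rw [hf.2.2 p]; ring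

lemma reach_add {N : PetriNet P T} {U : Set T} {m m' : P → ℝ}
    (h : Reach N U m m') (w : P → ℝ) (hw : 0 ≤ w) :
    Reach N U (fun p => m p + w p) (fun p => m' p + w p) := by
  induction h with
  | refl => exact Relation.ReflTransGen.refl
  | tail _ hstep ih =>
    refine ih.tail ?_
    obtain ⟨t, ht, α, hf⟩ := hstep
    refine ⟨t, ht, α, hf.1, fun p => ?_, fun p => ?_⟩
    · dsimp only
      have h1 := hf.2.1 p
      have h2 : (0:ℝ) ≤ w p := hw p
      linarith
    · dsimp only
      rw [hf.2.2 p]; ring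

lemma reach_avg {N : PetriNet P T} {U : Set T} {m a b : P → ℝ}
    (ha : Reach N U m a) (hb : Reach N U m b) (h0 : 0 ≤ m) :
    Reach N U m (fun p => (a p + b p) / 2) := by
  have ha' : 0 ≤ a := reach_nonneg ha h0
  have h1 : Reach N U (fun p => (1:ℝ)/2 * m p + (1:ℝ)/2 * m p)
      (fun p => (1:ℝ)/2 * a p + (1:ℝ)/2 * m p) :=
    reach_add (reach_scale ha (by norm_num : (0:ℝ) < 1/2)) _
      (fun p => by have h2 : (0:ℝ) ≤ m p := h0 p
                   show (0:ℝ) ≤ 1/2 * m p; linarith)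
  have h2 : Reach N U (fun p => (1:ℝ)/2 * b p + (1:ℝ)/2 * a p)
      (fun p => (a p + b p) / 2) → Reach N U
      (fun p => (1:ℝ)/2 * a p + (1:ℝ)/2 * m p) (fun p => (a p + b p)/2) := by
    intro h
    exact Relation.ReflTransGen.trans (reach_congr
      (reach_add (reach_scale hb (by norm_num : (0:ℝ) < 1/2)) _
        (fun p => by have h3 : (0:ℝ) ≤ a p := ha' p
                     show (0:ℝ) ≤ 1/2 * a p; linarith))
      (by funext p; ring) rfl) h
  refine reach_congr (Relation.ReflTransGen.trans h1 (h2 ?_)) (by funext p; ring) rfl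
  exact reach_congr Relation.ReflTransGen.refl rfl (by funext p; ring)

lemma reach_interp {N : PetriNet P T} {U : Set T} {m m' : P → ℝ}
    (h : Reach N U m m') (h0 : 0 ≤ m) {lam : ℝ} (hl : 0 < lam) (hl1 : lam ≤ 1) :
    Reach N U m (fun p => m p + lam * (m' p - m p)) := by
  have h1 : Reach N U (fun p => lam * m p + (1 - lam) * m p)
      (fun p => lam * m' p + (1 - lam) * m p) :=
    reach_add (reach_scale h hl) _
      (fun p => by have h2 : (0:ℝ) ≤ m p := h0 p
                   show (0:ℝ) ≤ (1 - lam) * m p; nlinarith)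
  exact reach_congr h1 (by funext p; ring) (by funext p; ring)

lemma reach_mono {N : PetriNet P T} {U V : Set T} (hUV : U ⊆ V) {m m' : P → ℝ}
    (h : Reach N U m m') : Reach N V m m' := by
  refine Relation.ReflTransGen.mono ?_ _ _ h
  rintro a b ⟨t, ht, α, hf⟩
  exact ⟨t, hUV ht, α, hf⟩

lemma reach_effect {N : PetriNet P T} {U : Finset T} {m m' : P → ℝ}
    (h : Reach N (↑U) m m') :
    ∃ s : T → ℝ, (∀ t, 0 ≤ s t) ∧ (∀ t, t ∉ U → s t = 0) ∧
      ∀ p, m' p = m p + ∑ t ∈ U, s t * PetriNet.delta N t p := by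
  induction h with
  | refl => exact ⟨0, fun t => le_refl _, fun t _ => rfl, fun p => by simp⟩
  | tail _ hstep ih =>
    obtain ⟨s, hs0, hsupp, heq⟩ := ih
    obtain ⟨t0, ht0, α, hf⟩ := hstep
    have ht0' : t0 ∈ U := ht0
    refine ⟨fun t => s t + (if t = t0 then α else 0), fun t => ?_, fun t ht => ?_,
      fun p => ?_⟩
    · dsimp only
      have := hs0 t; have := hf.1
      split <;> linarith
    · dsimp only
      rw [hsupp t ht, if_neg, add_zero]
      rintro rfl; exact ht ht0'
    · rw [hf.2.2 p, heq p]
      have h2 : ∀ x ∈ U, (s x + if x = t0 then α else 0) * PetriNet.delta N x p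
          = s x * PetriNet.delta N x p
            + (if x = t0 then α * PetriNet.delta N x p else 0) := by
        intro x _; split <;> ring
      rw [Finset.sum_congr rfl h2, Finset.sum_add_distrib,
        Finset.sum_ite_eq' U t0 (fun x => α * PetriNet.delta N x p), if_pos ht0']
      simp only [PetriNet.delta]
      ring


section Farkas

variable {Q : Type*} [Fintype Q]

lemma dot_comm (r m : Q → ℝ) : dot r m = dot m r := by
  simp [dot, mul_comm]

lemma dot_self_pos {b : Q → ℝ} (hb : b ≠ 0) : 0 < dot b b := by
  have : ∃ q, b q ≠ 0 := by
    by_contra hq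
    push_neg at hq
    exact hb (funext hq)
  obtain ⟨q0, hq0⟩ := this
  refine Finset.sum_pos' (fun q _ => mul_self_nonneg _) ⟨q0, Finset.mem_univ _, ?_⟩
  rcases lt_or_gt_of_ne hq0 with h | h <;> nlinarith

/-- membership in the cone generated by a list of vectors. -/
def InCone : List (Q → ℝ) → (Q → ℝ) → Prop
  | [], b => b = 0
  | a :: L, b => ∃ μ : ℝ, 0 ≤ μ ∧ InCone L (fun q => b q - μ * a q)

lemma inCone_congr {L : List (Q → ℝ)} {b b' : Q → ℝ} (h : InCone L b) (e : b = b') :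
    InCone L b' := e ▸ h

lemma inCone_lift {r' : Q → ℝ} {d : ℝ} (hd : 0 < d) {a : Q → ℝ} (ha : dot r' a = d) :
    ∀ (L : List (Q → ℝ)) (x : Q → ℝ), dot r' x = 0 → (∀ c ∈ L, dot r' c ≤ 0) →
      InCone (L.map (fun v => fun q => v q - (dot r' v / d) * a q)) x →
      ∃ ν : ℝ, 0 ≤ ν ∧ InCone L (fun q => x q - ν * a q) := by
  intro L
  induction L with
  | nil =>
    intro x hx _ hc
    refine ⟨0, le_refl _, ?_⟩
    simp only [List.map_nil, InCone] at hc ⊢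
    rw [hc]; funext q; simp
  | cons c L ih =>
    intro x hx hneg hc
    simp only [List.map_cons, InCone] at hc
    obtain ⟨μ, hμ, hc'⟩ := hc
    have hdne : d ≠ 0 := ne_of_gt hd
    have hx' : dot r' (fun q => x q - μ * ((fun q => c q - dot r' c / d * a q) q)) = 0 := by
      have hsub := dot_sub r' x (fun q => μ * ((fun q => c q - dot r' c / d * a q) q))
      have hsm := dot_smul_right r' (fun q => c q - dot r' c / d * a q) μ
      have hproj : dot r' (fun q => c q - dot r' c / d * a q) = 0 := by
        have h1 := dot_sub r' c (fun q => dot r' c / d * a q)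
        have h2 := dot_smul_right r' a (dot r' c / d)
        rw [h1, h2, ha]
        field_simp
        ring
      rw [hsub, hsm, hproj, hx]
      ring
    obtain ⟨ν, hν, hL⟩ := ih _ hx' (fun e he => hneg e (List.mem_cons_of_mem _ he)) hc'
    have hφc : dot r' c ≤ 0 := hneg c (List.mem_cons_self)
    refine ⟨ν - μ * (dot r' c / d), ?_, ?_⟩
    · have : dot r' c / d ≤ 0 := div_nonpos_of_nonpos_of_nonneg hφc hd.le
      nlinarith
    · refine ⟨μ, hμ, inCone_congr hL ?_⟩
      funext q; dsimp only; ring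

theorem farkas : ∀ (n : ℕ) (L : List (Q → ℝ)), L.length ≤ n → ∀ b : Q → ℝ,
    InCone L b ∨ ∃ r : Q → ℝ, (∀ a ∈ L, dot r a ≤ 0) ∧ 0 < dot r b := by
  intro n
  induction n with
  | zero =>
    intro L hL b
    have : L = [] := List.length_eq_zero_iff.mp (Nat.le_zero.mp hL)
    subst this
    by_cases hb : b = 0
    · left; exact hb
    · right; exact ⟨b, fun a ha => absurd ha (List.not_mem_nil), dot_self_pos hb⟩
  | succ n ih =>
    intro L hL b
    match L with
    | [] =>
      by_cases hb : b = 0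
      · left; exact hb
      · right; exact ⟨b, fun a ha => absurd ha (List.not_mem_nil), dot_self_pos hb⟩
    | a :: L' =>
      have hL' : L'.length ≤ n := by
        simp only [List.length_cons] at hL; omega
      rcases ih L' hL' b with hc | ⟨r', hr', hrb⟩
      · left
        exact ⟨0, le_refl 0, inCone_congr hc (by funext q; ring)⟩
      · by_cases hra : dot r' a ≤ 0
        · right
          refine ⟨r', fun c hc => ?_, hrb⟩
          rcases List.mem_cons.mp hc with rfl | hc
          · exact hra
          · exact hr' c hc
        · push_neg at hra
          have hdne : dot r' a ≠ 0 := ne_of_gt hra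
          set proj : (Q → ℝ) → (Q → ℝ) :=
            fun v => fun q => v q - (dot r' v / dot r' a) * a q with hproj
          have hlen : (L'.map proj).length ≤ n := by simpa using hL'
          rcases ih (L'.map proj) hlen (proj b) with hc | ⟨z, hz, hzb⟩
          · left
            have hprojb0 : dot r' (proj b) = 0 := by
              rw [hproj]
              dsimp only
              rw [dot_sub, dot_smul_right]
              field_simp
              ring
            obtain ⟨ν, hν, hL2⟩ := inCone_lift hra rfl L' (proj b) hprojb0 hr' hc
            refine ⟨dot r' b / dot r' a + ν, ?_, ?_⟩
            · have : 0 ≤ dot r' b / dot r' a := le_of_lt (div_pos hrb hra)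
              linarith
            · refine inCone_congr hL2 ?_
              funext q
              rw [hproj]
              dsimp only
              ring
          · right
            have dotz : ∀ v : Q → ℝ, dot z (proj v)
                = dot z v - dot z a * (dot r' v / dot r' a) := by
              intro v
              rw [hproj]
              dsimp only
              rw [dot_sub, dot_smul_right]
              ring
            refine ⟨fun q => z q - (dot z a / dot r' a) * r' q, fun c hc => ?_, ?_⟩
            · have doty : dot (fun q => z q - dot z a / dot r' a * r' q) c
                  = dot z c - dot z a / dot r' a * dot r' c := by
                rw [dot_comm]
                rw [dot_sub c z (fun q => dot z a / dot r' a * r' q), dot_smul_right,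
                  dot_comm c z, dot_comm c r']
              rcases List.mem_cons.mp hc with rfl | hc
              · rw [doty]
                field_simp
                norm_num
              · have h3 := hz (proj c) (List.mem_map_of_mem (f := proj) hc)
                rw [dotz c] at h3
                rw [doty]
                have e : dot z a * (dot r' c / dot r' a)
                    = dot z a / dot r' a * dot r' c := by ring
                linarith [e ▸ h3]
            · have doty : dot (fun q => z q - dot z a / dot r' a * r' q) b
                  = dot z b - dot z a / dot r' a * dot r' b := by
                rw [dot_comm]
                rw [dot_sub b z (fun q => dot z a / dot r' a * r' q), dot_smul_right,
                  dot_comm b z, dot_comm b r']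
              rw [dotz b] at hzb
              rw [doty]
              have e : dot z a * (dot r' b / dot r' a)
                  = dot z a / dot r' a * dot r' b := by ring
              linarith [e ▸ hzb]

lemma dot_neg (r v : Q → ℝ) : dot r (fun q => - v q) = - dot r v := by
  simp [dot, mul_comm]

lemma dot_zero (r : Q → ℝ) : dot r (fun _ => 0) = 0 := by simp [dot]

lemma inCone_map_iff {l : List T} (hl : l.Nodup) (g : T → Q → ℝ) (b : Q → ℝ) :
    InCone (l.map g) b ↔ ∃ w : T → ℝ, (∀ t, 0 ≤ w t) ∧ (∀ t, t ∉ l → w t = 0) ∧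
      ∀ q, b q = ∑ t ∈ l.toFinset, w t * g t q := by
  induction l generalizing b with
  | nil =>
    simp only [List.map_nil, InCone, List.toFinset_nil, Finset.sum_empty]
    constructor
    · rintro rfl
      exact ⟨0, fun t => le_refl _, fun t _ => rfl, fun q => rfl⟩
    · rintro ⟨w, _, _, heq⟩
      funext q; exact heq q
  | cons t l ih =>
    have htl : t ∉ l := (List.nodup_cons.mp hl).1
    have hnd : l.Nodup := (List.nodup_cons.mp hl).2
    have htf : t ∉ l.toFinset := fun hh => htl (List.mem_toFinset.mp hh)
    simp only [List.map_cons, InCone, List.toFinset_cons]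
    constructor
    · rintro ⟨μ, hμ, hc⟩
      obtain ⟨w', h0, hsupp, heq⟩ := (ih hnd _).mp hc
      refine ⟨Function.update w' t μ, fun s => ?_, fun s hs => ?_, fun q => ?_⟩
      · rcases eq_or_ne s t with rfl | hst
        · rw [Function.update_self]; exact hμ
        · rw [Function.update_of_ne hst]; exact h0 s
      · have hst : s ≠ t := fun e => hs (e ▸ List.mem_cons_self)
        rw [Function.update_of_ne hst]
        exact hsupp s (fun hsl => hs (List.mem_cons_of_mem _ hsl))
      · rw [Finset.sum_insert htf, Function.update_self]
        have : ∑ s ∈ l.toFinset, Function.update w' t μ s * g s q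
            = ∑ s ∈ l.toFinset, w' s * g s q := by
          apply Finset.sum_congr rfl
          intro s hsl
          rw [Function.update_of_ne (by rintro rfl; exact htf hsl)]
        rw [this]
        have h9 := heq q
        linarith [h9]
    · rintro ⟨w, h0, hsupp, heq⟩
      refine ⟨w t, h0 t, ?_⟩
      refine (ih hnd _).mpr ⟨Function.update w t 0, fun s => ?_, fun s hs => ?_, fun q => ?_⟩
      · rcases eq_or_ne s t with rfl | hst
        · rw [Function.update_self]
        · rw [Function.update_of_ne hst]; exact h0 s
      · rcases eq_or_ne s t with rfl | hst
        · rw [Function.update_self]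
        · rw [Function.update_of_ne hst]
          exact hsupp s (fun hh => (List.mem_cons.mp hh).elim (fun e => hst e) hs)
      · have : ∑ s ∈ l.toFinset, Function.update w t 0 s * g s q
            = ∑ s ∈ l.toFinset, w s * g s q := by
          apply Finset.sum_congr rfl
          intro s hsl
          rw [Function.update_of_ne (by rintro rfl; exact htf hsl)]
        show b q - w t * g t q = ∑ s ∈ l.toFinset, Function.update w t 0 s * g s q
        rw [this, heq q, Finset.sum_insert htf]
        ring

end Farkas

section FarkasApps

/-- Case 1 certificate: no nonnegative solution at all. -/
lemma farkas_app1 (N : PetriNet P T) (U : Finset T) (Δ : P → ℝ)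
    (hne : ¬ ∃ x : T → ℝ, (∀ t, 0 ≤ x t) ∧ (∀ t, t ∉ U → x t = 0) ∧
      ∀ p, Δ p = ∑ t ∈ U, x t * PetriNet.delta N t p) :
    ∃ r : P → ℝ, (∀ t ∈ U, dot r (PetriNet.delta N t) ≤ 0) ∧ 0 < dot r Δ := by
  rcases farkas (U.toList.map (fun t => PetriNet.delta N t)).length
      (U.toList.map (fun t => PetriNet.delta N t)) le_rfl Δ with hc | ⟨r, hr, hrb⟩
  · exfalso
    apply hne
    obtain ⟨w, h0, hsupp, heq⟩ := (inCone_map_iff U.nodup_toList _ Δ).mp hc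
    refine ⟨w, h0, fun t ht => hsupp t (fun hh => ht (Finset.mem_toList.mp hh)), fun p => ?_⟩
    have := heq p
    rwa [Finset.toList_toFinset] at this
  · exact ⟨r, fun t ht => hr _ (List.mem_map_of_mem (Finset.mem_toList.mpr ht)), hrb⟩

/-- embedding of a vector-and-scalar into `Option P → ℝ`. -/
def emb (v : P → ℝ) (c : ℝ) : Option P → ℝ := fun o => o.elim c v

lemma dot_emb (R : Option P → ℝ) (v : P → ℝ) (c : ℝ) :
    dot R (emb v c) = R none * c + dot (fun p => R (some p)) v := by
  simp [dot, emb, Fintype.sum_option]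

/-- Case 2a certificate: a face certificate for a transition forced to zero. -/
lemma farkas_app2 (N : PetriNet P T) (U : Finset T) (Δ : P → ℝ) {t' : T} (ht' : t' ∈ U)
    (hx : ∃ x : T → ℝ, (∀ t, 0 ≤ x t) ∧ (∀ t, t ∉ U → x t = 0) ∧
      ∀ p, Δ p = ∑ t ∈ U, x t * PetriNet.delta N t p)
    (hzero : ∀ z : T → ℝ, (∀ t, 0 ≤ z t) → (∀ t, t ∉ U → z t = 0) →
      (∀ p, Δ p = ∑ t ∈ U, z t * PetriNet.delta N t p) → z t' = 0) :
    ∃ r : P → ℝ, (∀ t ∈ U, dot r (PetriNet.delta N t) ≤ 0) ∧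
      dot r (PetriNet.delta N t') < 0 ∧ dot r Δ = 0 := by
  obtain ⟨x, hx0, hxs, hxe⟩ := hx
  set gg : T → Option P → ℝ :=
    fun t => emb (PetriNet.delta N t) (if t = t' then 1 else 0) with hgg
  set L : List (Option P → ℝ) :=
    emb (fun p => - Δ p) 0 :: emb Δ 0 :: U.toList.map gg with hLdef
  rcases farkas L.length L le_rfl (emb (fun _ => 0) 1) with hc | ⟨R, hR, hRv⟩
  · exfalso
    obtain ⟨aa, haa, bb, hbb, hc⟩ := hc
    obtain ⟨w, h0, hsupp, heq⟩ := (inCone_map_iff U.nodup_toList gg _).mp hc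
    -- evaluate at `none`
    have hnone := heq none
    rw [Finset.toList_toFinset] at hnone
    simp only [emb, Option.elim] at hnone
    have hwt' : w t' = 1 := by
      have : ∑ t ∈ U, w t * (if t = t' then (1:ℝ) else 0)
          = ∑ t ∈ U, (if t = t' then w t else 0) := by
        apply Finset.sum_congr rfl; intro t _; split <;> ring
      rw [hgg] at hnone
      simp only [emb, Option.elim] at hnone
      rw [this, Finset.sum_ite_eq' U t' (fun t => w t), if_pos ht'] at hnone
      linarith [hnone]
    -- evaluate at `some p`
    have hsome : ∀ p, ∑ t ∈ U, w t * PetriNet.delta N t p = (aa - bb) * Δ p := by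
      intro p
      have := heq (some p)
      rw [Finset.toList_toFinset] at this
      simp only [hgg, emb, Option.elim] at this
      linarith [this]
    set c := aa - bb with hcdef
    by_cases hcle : c ≤ 1
    · -- z = (1 - c) • x + w
      have hz0 := hzero (fun t => (1 - c) * x t + w t)
        (fun t => by
          show (0:ℝ) ≤ (1 - c) * x t + w t
          have h1 := hx0 t; have h2 := h0 t
          have h3 : (0:ℝ) ≤ 1 - c := by linarith
          nlinarith [mul_nonneg h3 h1])
        (fun t ht => by
          show (1 - c) * x t + w t = 0
          rw [hxs t ht, hsupp t (fun hh => ht (Finset.mem_toList.mp hh))]; ring)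
        (fun p => by
          show Δ p = ∑ t ∈ U, ((1 - c) * x t + w t) * PetriNet.delta N t p
          have e1 : ∑ t ∈ U, ((1 - c) * x t + w t) * PetriNet.delta N t p
              = (1 - c) * (∑ t ∈ U, x t * PetriNet.delta N t p)
                + ∑ t ∈ U, w t * PetriNet.delta N t p := by
            rw [Finset.mul_sum, ← Finset.sum_add_distrib]
            apply Finset.sum_congr rfl; intros; ring
          rw [e1, ← hxe p, hsome p]; ring)
      have hz0' : (1 - c) * x t' + w t' = 0 := hz0
      have h1 := hx0 t'
      have h3 : (0:ℝ) ≤ 1 - c := by linarith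
      nlinarith [mul_nonneg h3 h1, hwt']
    · push_neg at hcle
      have hcpos : 0 < c := by linarith
      have hz0 := hzero (fun t => w t / c)
        (fun t => div_nonneg (h0 t) hcpos.le)
        (fun t ht => by
          show w t / c = 0
          rw [hsupp t (fun hh => ht (Finset.mem_toList.mp hh))]; simp)
        (fun p => by
          show Δ p = ∑ t ∈ U, (w t / c) * PetriNet.delta N t p
          have e1 : ∑ t ∈ U, (w t / c) * PetriNet.delta N t p
              = (∑ t ∈ U, w t * PetriNet.delta N t p) / c := by
            rw [Finset.sum_div]
            apply Finset.sum_congr rfl; intros; ring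
          rw [e1, hsome p]
          field_simp)
      have hz0' : w t' / c = 0 := hz0
      rw [hwt'] at hz0'
      exact one_div_ne_zero (ne_of_gt hcpos) hz0'
  · -- extract the certificate
    set r : P → ℝ := fun p => R (some p) with hr
    have hρ : 0 < R none := by
      have := hRv
      rw [dot_emb, dot_zero] at this
      linarith
    have hU : ∀ t ∈ U, dot r (PetriNet.delta N t)
        + R none * (if t = t' then 1 else 0) ≤ 0 := by
      intro t ht
      have := hR (gg t) (by
        rw [hLdef]
        exact List.mem_cons_of_mem _ (List.mem_cons_of_mem _
          (List.mem_map_of_mem (f := gg) (Finset.mem_toList.mpr ht))))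
      rw [hgg] at this
      rw [dot_emb] at this
      linarith
    have hΔle : dot r Δ ≤ 0 := by
      have := hR (emb Δ 0) (by rw [hLdef]; exact List.mem_cons_of_mem _ (List.mem_cons_self))
      rw [dot_emb] at this
      linarith
    have hΔge : 0 ≤ dot r Δ := by
      have := hR (emb (fun p => - Δ p) 0) (by rw [hLdef]; exact List.mem_cons_self)
      rw [dot_emb, dot_neg] at this
      linarith
    refine ⟨r, fun t ht => ?_, ?_, le_antisymm hΔle hΔge⟩
    · have := hU t ht
      split at this
      · linarith
      · linarith
    · have := hU t' ht'
      rw [if_pos rfl] at this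
      linarith

end FarkasApps

section Siphon

/-- `t` can eventually be fired (with some positive amount) from `m` in `M_U`. -/
def Fireable (M : PetriNet P T) (U : Set T) (m : P → ℝ) (t : T) : Prop :=
  ∃ m' α, Reach M U m m' ∧ 0 < α ∧ ∀ p, α * M.pre t p ≤ m' p

lemma pre_nonneg (M : PetriNet P T) (t : T) (p : P) : 0 ≤ M.pre t p := by
  simp only [PetriNet.pre]; positivity

lemma post_nonneg (M : PetriNet P T) (t : T) (p : P) : 0 ≤ M.post t p := by
  simp only [PetriNet.post]; positivity

lemma exists_siphon (M : PetriNet P T) (U : Set T) (m0 : P → ℝ) (h0 : 0 ≤ m0) {t : T}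
    (ht : t ∈ U) (hnf : ¬ Fireable M U m0 t) :
    ∃ Q : Set P, (∀ p ∈ Q, m0 p = 0) ∧ (∃ q ∈ Q, 0 < M.pre t q) ∧
      ∀ t' ∈ U, (∃ q ∈ Q, 0 < M.post t' q) → (∃ q ∈ Q, 0 < M.pre t' q) := by
  classical
  set S : Set P := {p | ∃ m', Reach M U m0 m' ∧ 0 < m' p} with hS
  have hcomb : ∀ G : Finset P, (∀ p ∈ G, p ∈ S) →
      ∃ m', Reach M U m0 m' ∧ ∀ p ∈ G, 0 < m' p := by
    intro G
    induction G using Finset.induction_on with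
    | empty => intro _; exact ⟨m0, Relation.ReflTransGen.refl, by simp⟩
    | insert a G hnotin ih =>
      intro hmem
      obtain ⟨m1, hm1, hm1pos⟩ := ih (fun p hp => hmem p (Finset.mem_insert_of_mem hp))
      obtain ⟨m2, hm2, hm2pos⟩ := hmem a (Finset.mem_insert_self a G)
      refine ⟨fun p => (m1 p + m2 p) / 2, reach_avg hm1 hm2 h0, fun p hp => ?_⟩
      rcases Finset.mem_insert.mp hp with rfl | hp
      · have h1 : (0:ℝ) ≤ m1 p := reach_nonneg hm1 h0 p
        have h2 := hm2pos
        linarith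
      · have h2 : (0:ℝ) ≤ m2 p := reach_nonneg hm2 h0 p
        have h1 := hm1pos p hp
        linarith
  have henable : ∀ t' : T, (∀ p, 0 < M.pre t' p → p ∈ S) →
      ∃ m' α, Reach M U m0 m' ∧ 0 < α ∧ ∀ p, α * M.pre t' p ≤ m' p := by
    intro t' hpre
    set G : Finset P := Finset.univ.filter (fun p => 0 < M.pre t' p) with hG
    obtain ⟨m', hm', hmpos⟩ := hcomb G (fun p hp => hpre p (Finset.mem_filter.mp hp).2)
    have hm'0 : 0 ≤ m' := reach_nonneg hm' h0
    by_cases hGne : G.Nonempty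
    · refine ⟨m', G.inf' hGne (fun p => m' p / M.pre t' p), hm', ?_, ?_⟩
      · rw [Finset.lt_inf'_iff]
        intro p hp
        exact div_pos (hmpos p hp) (Finset.mem_filter.mp hp).2
      · intro p
        by_cases hpp : 0 < M.pre t' p
        · have hpG : p ∈ G := Finset.mem_filter.mpr ⟨Finset.mem_univ _, hpp⟩
          have hle := Finset.inf'_le (fun p => m' p / M.pre t' p) hpG
          calc G.inf' hGne (fun p => m' p / M.pre t' p) * M.pre t' p
              ≤ m' p / M.pre t' p * M.pre t' p :=
                mul_le_mul_of_nonneg_right hle (pre_nonneg M t' p)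
            _ = m' p := by field_simp
        · have : M.pre t' p = 0 := le_antisymm (not_lt.mp hpp) (pre_nonneg M t' p)
          rw [this, mul_zero]
          exact hm'0 p
    · refine ⟨m0, 1, Relation.ReflTransGen.refl, one_pos, fun p => ?_⟩
      have : M.pre t' p = 0 := by
        by_contra hne
        exact hGne ⟨p, Finset.mem_filter.mpr ⟨Finset.mem_univ _,
          lt_of_le_of_ne (pre_nonneg M t' p) (Ne.symm hne)⟩⟩
      rw [this, mul_zero]
      exact h0 p
  have hfire2 : ∀ t' ∈ U, (∀ p, 0 < M.pre t' p → p ∈ S) →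
      ∀ p, 0 < M.post t' p → p ∈ S := by
    intro t' ht' hpre p hpost
    obtain ⟨m', α, hm', hα, hbound⟩ := henable t' hpre
    refine ⟨fun q => m' q + (α/2) * (M.post t' q - M.pre t' q),
      hm'.tail ⟨t', ht', α/2, half_pos hα, fun q => ?_, fun q => rfl⟩, ?_⟩
    · have h1 := hbound q
      have h2 := pre_nonneg M t' q
      nlinarith
    · have h1 := hbound p
      have h2 := pre_nonneg M t' p
      nlinarith
  refine ⟨Sᶜ, fun p hp => ?_, ?_, fun t' ht' h => ?_⟩
  · by_contra hne
    exact hp ⟨m0, Relation.ReflTransGen.refl, lt_of_le_of_ne (h0 p) (Ne.symm hne)⟩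
  · by_contra hq
    push_neg at hq
    refine hnf ?_
    apply henable t
    intro p hp
    by_contra hpS
    exact absurd hp (not_lt.mpr (hq p hpS))
  · obtain ⟨q, hqQ, hqpost⟩ := h
    by_contra hq
    push_neg at hq
    have hpre : ∀ p, 0 < M.pre t' p → p ∈ S := by
      intro p hp
      by_contra hpS
      exact absurd hp (not_lt.mpr (hq p hpS))
    exact hqQ (hfire2 t' ht' hpre q hqpost)

end Siphon

section Schedule

lemma sweep (N : PetriNet P T) (U : Finset T) (z : T → ℝ) (hz : ∀ t, 0 ≤ z t) :
    ∀ (l : List T), (∀ t ∈ l, t ∈ U) → l.Nodup →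
    ∀ c : P → ℝ, 0 ≤ c → (∀ p, (∑ t ∈ l.toFinset, z t * N.pre t p) ≤ c p) →
    Reach N ↑U c (fun p => c p + ∑ t ∈ l.toFinset, z t * PetriNet.delta N t p) := by
  intro l
  induction l with
  | nil =>
    intro _ _ c hc _
    exact reach_congr Relation.ReflTransGen.refl rfl (by funext p; simp)
  | cons t l ih =>
    intro hmem hnd c hc hpre
    have htl : t ∉ l.toFinset := fun hh =>
      (List.nodup_cons.mp hnd).1 (List.mem_toFinset.mp hh)
    have hsumpre : ∀ p, z t * N.pre t p + ∑ u ∈ l.toFinset, z u * N.pre u p ≤ c p := by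
      intro p
      have := hpre p
      rwa [List.toFinset_cons, Finset.sum_insert htl] at this
    have hsublnn : ∀ p, 0 ≤ ∑ u ∈ l.toFinset, z u * N.pre u p := by
      intro p
      exact Finset.sum_nonneg (fun u _ => mul_nonneg (hz u) (pre_nonneg N u p))
    rcases (hz t).eq_or_lt with hzt | hzt
    · have := ih (fun u hu => hmem u (List.mem_cons_of_mem _ hu))
        (List.nodup_cons.mp hnd).2 c hc
        (fun p => by have := hsumpre p; nlinarith [mul_nonneg (hz t) (pre_nonneg N t p)])
      refine reach_congr this rfl ?_
      funext p
      rw [List.toFinset_cons, Finset.sum_insert htl, ← hzt]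
      ring
    · set c' : P → ℝ := fun p => c p + z t * (N.post t p - N.pre t p) with hc'
      have hfire : N.fire t (z t) c c' :=
        ⟨hzt, fun p => by have := hsumpre p; have := hsublnn p; linarith, fun p => rfl⟩
      have hc'0 : 0 ≤ c' := fire_nonneg hfire
      have hstep : N.stepOn ↑U c c' := ⟨t, hmem t (List.mem_cons_self), z t, hfire⟩
      have hpre' : ∀ p, (∑ u ∈ l.toFinset, z u * N.pre u p) ≤ c' p := by
        intro p
        have h1 := hsumpre p
        have h2 : 0 ≤ z t * N.post t p :=
          mul_nonneg (hz t) (post_nonneg N t p)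
        have : c' p = c p - z t * N.pre t p + z t * N.post t p := by
          rw [hc']; ring
        rw [this]
        linarith
      have := ih (fun u hu => hmem u (List.mem_cons_of_mem _ hu))
        (List.nodup_cons.mp hnd).2 c' hc'0 hpre'
      refine Relation.ReflTransGen.head hstep (reach_congr this rfl ?_)
      funext p
      rw [List.toFinset_cons, Finset.sum_insert htl, hc']
      simp only [PetriNet.delta]
      ring

lemma reach_of_schedule (N : PetriNet P T) (U : Finset T) (A B : P → ℝ) (y : T → ℝ)
    (hy : ∀ t, 0 ≤ y t) (hA : 0 ≤ A) (hB : 0 ≤ B)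
    (heq : ∀ p, B p = A p + ∑ t ∈ U, y t * PetriNet.delta N t p)
    (hpos : ∀ p, 0 < ∑ t ∈ U, y t * N.pre t p → 0 < A p ∧ 0 < B p) :
    Reach N ↑U A B := by
  classical
  set K : P → ℝ := fun p => ∑ t ∈ U, y t * N.pre t p with hK
  have hK0 : ∀ p, 0 ≤ K p := fun p =>
    Finset.sum_nonneg (fun u _ => mul_nonneg (hy u) (pre_nonneg N u p))
  obtain ⟨n, hn⟩ := exists_nat_gt
    (∑ p : P, (if 0 < K p then K p / min (A p) (B p) else 0))
  have hterm : ∀ p, 0 ≤ (if 0 < K p then K p / min (A p) (B p) else 0) := by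
    intro p
    split
    · rename_i hh
      obtain ⟨h1, h2⟩ := hpos p hh
      exact div_nonneg (hK0 p) (lt_min h1 h2).le
    · exact le_refl _
  have hn0 : 0 < n := by
    rcases Nat.eq_zero_or_pos n with rfl | h
    · exfalso
      have hR : (0:ℝ) ≤ ∑ p : P, (if 0 < K p then K p / min (A p) (B p) else 0) :=
        Finset.sum_nonneg (fun p _ => hterm p)
      simp only [Nat.cast_zero] at hn
      linarith
    · exact h
  have hnR : (0:ℝ) < n := by exact_mod_cast hn0
  have hKlt : ∀ p, 0 < K p → K p / (n:ℝ) < min (A p) (B p) := by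
    intro p hp
    have h1 : K p / min (A p) (B p)
        ≤ ∑ q : P, (if 0 < K q then K q / min (A q) (B q) else 0) := by
      have hs := Finset.single_le_sum (f := fun q => if 0 < K q then K q / min (A q) (B q) else 0)
        (fun q _ => hterm q) (Finset.mem_univ p)
      simpa [hp] using hs
    have h2 : K p / min (A p) (B p) < n := lt_of_le_of_lt h1 hn
    obtain ⟨hA', hB'⟩ := hpos p hp
    have hmin : 0 < min (A p) (B p) := lt_min hA' hB'
    rw [div_lt_iff₀ hmin] at h2
    rw [div_lt_iff₀ hnR]
    nlinarith
  set mrk : ℕ → P → ℝ := fun i p => A p + (i:ℝ)/(n:ℝ) * (B p - A p) with hmrk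
  have hconv : ∀ i : ℕ, i ≤ n → ∀ p, mrk i p = (1 - (i:ℝ)/n) * A p + (i:ℝ)/n * B p := by
    intro i _ p
    rw [hmrk]; ring
  have hcoef : ∀ i : ℕ, i ≤ n → 0 ≤ (i:ℝ)/n ∧ (i:ℝ)/n ≤ 1 := by
    intro i hi
    constructor
    · positivity
    · rw [div_le_one hnR]
      exact_mod_cast hi
  have hmrk0 : ∀ i : ℕ, i ≤ n → 0 ≤ mrk i := by
    intro i hi p
    show (0:ℝ) ≤ mrk i p
    rw [hconv i hi p]
    obtain ⟨h1, h2⟩ := hcoef i hi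
    have hA' : (0:ℝ) ≤ A p := hA p
    have hB' : (0:ℝ) ≤ B p := hB p
    nlinarith
  have hmin_le : ∀ i : ℕ, i ≤ n → ∀ p, min (A p) (B p) ≤ mrk i p := by
    intro i hi p
    rw [hconv i hi p]
    obtain ⟨h1, h2⟩ := hcoef i hi
    rcases min_le_iff.mpr (Or.inl (le_refl (A p))) with _
    have hminA : min (A p) (B p) ≤ A p := min_le_left _ _
    have hminB : min (A p) (B p) ≤ B p := min_le_right _ _
    nlinarith
  have main : ∀ i : ℕ, i ≤ n → Reach N ↑U A (mrk i) := by
    intro i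
    induction i with
    | zero =>
      intro _
      refine reach_congr Relation.ReflTransGen.refl rfl ?_
      funext p; rw [hmrk]; simp
    | succ i ih =>
      intro hi
      have hi' : i ≤ n := Nat.le_of_succ_le hi
      have hstep := sweep N U (fun t => y t / n) (fun t => div_nonneg (hy t) hnR.le)
        U.toList (fun t hh => Finset.mem_toList.mp hh) U.nodup_toList
        (mrk i) (hmrk0 i hi') ?_
      · refine Relation.ReflTransGen.trans (ih hi') (reach_congr hstep rfl ?_)
        funext p
        rw [Finset.toList_toFinset]
        have e1 : ∑ t ∈ U, y t / n * PetriNet.delta N t p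
            = (∑ t ∈ U, y t * PetriNet.delta N t p) / n := by
          rw [Finset.sum_div]
          apply Finset.sum_congr rfl; intros; ring
        rw [e1]
        have e2 : ∑ t ∈ U, y t * PetriNet.delta N t p = B p - A p := by
          linarith [heq p]
        rw [e2, hmrk]
        push_cast
        field_simp
        ring
      · intro p
        rw [Finset.toList_toFinset]
        have e1 : ∑ t ∈ U, y t / n * N.pre t p = K p / n := by
          rw [hK, Finset.sum_div]
          apply Finset.sum_congr rfl; intros; ring
        rw [e1]
        rcases (hK0 p).eq_or_lt with h | h
        · rw [← h]
          simp only [zero_div]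
          exact hmrk0 i hi' p
        · exact le_trans (hKlt p h).le (hmin_le i hi' p)
  have := main n (le_refl n)
  refine reach_congr this rfl ?_
  funext p
  rw [hmrk]
  field_simp
  ring

end Schedule

section FullReach

lemma primed (M : PetriNet P T) (U : Finset T) (hUne : U.Nonempty) (m0 : P → ℝ)
    (h0 : 0 ≤ m0) (hfw : ∀ t ∈ U, Fireable M ↑U m0 t) :
    ∃ (c : P → ℝ) (s : T → ℝ), Reach M ↑U m0 c ∧ (∀ t, 0 ≤ s t) ∧
      (∀ t, t ∉ U → s t = 0) ∧ (∀ t ∈ U, 0 < s t) ∧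
      (∀ p, c p = m0 p + ∑ t ∈ U, s t * PetriNet.delta M t p) ∧
      (∀ p, (∃ t ∈ U, 0 < M.pre t p + M.post t p) → 0 < c p) := by
  classical
  -- single-transition witness
  have single : ∀ t ∈ U, ∃ (c : P → ℝ) (s : T → ℝ), Reach M ↑U m0 c ∧ (∀ u, 0 ≤ s u) ∧
      (∀ u, u ∉ U → s u = 0) ∧ 0 < s t ∧
      (∀ p, c p = m0 p + ∑ u ∈ U, s u * PetriNet.delta M u p) ∧
      (∀ p, 0 < M.pre t p + M.post t p → 0 < c p) := by
    intro t ht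
    obtain ⟨m1, α, hm1, hα, hbound⟩ := hfw t ht
    obtain ⟨s1, hs10, hs1supp, hs1eq⟩ := reach_effect hm1
    set c : P → ℝ := fun p => m1 p + (α/2) * (M.post t p - M.pre t p) with hcdef
    have hreach : Reach M ↑U m0 c :=
      hm1.tail ⟨t, ht, α/2, half_pos hα, fun q => by
        have h1 := hbound q
        have h2 := pre_nonneg M t q
        nlinarith, fun q => rfl⟩
    refine ⟨c, fun u => s1 u + (if u = t then α/2 else 0), hreach, fun u => ?_, fun u hu => ?_,
      ?_, fun p => ?_, fun p hp => ?_⟩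
    · show (0:ℝ) ≤ s1 u + (if u = t then α/2 else 0)
      have := hs10 u; split <;> linarith
    · show s1 u + (if u = t then α/2 else 0) = 0
      rw [hs1supp u hu, if_neg, add_zero]
      rintro rfl; exact hu ht
    · show 0 < s1 t + (if t = t then α/2 else 0)
      rw [if_pos rfl]
      have := hs10 t
      linarith
    · show m1 p + (α/2) * (M.post t p - M.pre t p)
          = m0 p + ∑ u ∈ U, (s1 u + if u = t then α/2 else 0) * PetriNet.delta M u p
      rw [hs1eq p]
      have h2 : ∀ u ∈ U, (s1 u + if u = t then α/2 else 0) * PetriNet.delta M u p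
          = s1 u * PetriNet.delta M u p
            + (if u = t then (α/2) * PetriNet.delta M u p else 0) := by
        intro u _; split <;> ring
      rw [Finset.sum_congr rfl h2, Finset.sum_add_distrib,
        Finset.sum_ite_eq' U t (fun u => (α/2) * PetriNet.delta M u p), if_pos ht]
      simp only [PetriNet.delta]
      ring
    · show 0 < m1 p + (α/2) * (M.post t p - M.pre t p)
      have h1 := hbound p
      have h2 := pre_nonneg M t p
      have h3 := post_nonneg M t p
      nlinarith
  -- combine over a nonempty subset
  have comb : ∀ G : Finset T, G.Nonempty → G ⊆ U →
      ∃ (c : P → ℝ) (s : T → ℝ), Reach M ↑U m0 c ∧ (∀ u, 0 ≤ s u) ∧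
        (∀ u, u ∉ U → s u = 0) ∧ (∀ u ∈ G, 0 < s u) ∧
        (∀ p, c p = m0 p + ∑ u ∈ U, s u * PetriNet.delta M u p) ∧
        (∀ p, (∃ u ∈ G, 0 < M.pre u p + M.post u p) → 0 < c p) := by
    intro G
    induction G using Finset.induction_on with
    | empty => intro h; exact absurd h (by simp)
    | insert a G hnotin ih =>
      intro _ hsub
      have haU : a ∈ U := hsub (Finset.mem_insert_self a G)
      obtain ⟨c1, s1, hr1, h01, hsupp1, hpos1, heq1, hP1⟩ := single a haU
      rcases G.eq_empty_or_nonempty with rfl | hGne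
      · refine ⟨c1, s1, hr1, h01, hsupp1, ?_, heq1, ?_⟩
        · intro u hu
          rcases Finset.mem_insert.mp hu with rfl | hu
          · exact hpos1
          · exact absurd hu (by simp)
        · intro p hp
          obtain ⟨u, hu, hup⟩ := hp
          rcases Finset.mem_insert.mp hu with rfl | hu
          · exact hP1 p hup
          · exact absurd hu (by simp)
      · obtain ⟨c2, s2, hr2, h02, hsupp2, hpos2, heq2, hP2⟩ :=
          ih hGne (fun u hu => hsub (Finset.mem_insert_of_mem hu))
        have hc10 : 0 ≤ c1 := reach_nonneg hr1 h0
        have hc20 : 0 ≤ c2 := reach_nonneg hr2 h0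
        refine ⟨fun p => (c1 p + c2 p) / 2, fun u => (s1 u + s2 u) / 2,
          reach_avg hr1 hr2 h0, fun u => ?_, fun u hu => ?_, fun u hu => ?_,
          fun p => ?_, fun p hp => ?_⟩
        · have := h01 u; have := h02 u; show (0:ℝ) ≤ (s1 u + s2 u)/2; linarith
        · show (s1 u + s2 u)/2 = 0
          rw [hsupp1 u hu, hsupp2 u hu]; norm_num
        · show 0 < (s1 u + s2 u)/2
          rcases Finset.mem_insert.mp hu with rfl | hu
          · have := h02 u; have := hpos1; linarith
          · have := h01 u; have := hpos2 u hu; linarith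
        · show (c1 p + c2 p)/2 = m0 p + ∑ u ∈ U, (s1 u + s2 u)/2 * PetriNet.delta M u p
          have hs : ∑ u ∈ U, (s1 u + s2 u)/2 * PetriNet.delta M u p
              = ((∑ u ∈ U, s1 u * PetriNet.delta M u p)
                + (∑ u ∈ U, s2 u * PetriNet.delta M u p))/2 := by
            rw [← Finset.sum_add_distrib, Finset.sum_div]
            apply Finset.sum_congr rfl; intros; ring
          rw [hs]
          linarith [heq1 p, heq2 p]
        · show 0 < (c1 p + c2 p)/2
          obtain ⟨u, hu, hup⟩ := hp
          rcases Finset.mem_insert.mp hu with rfl | hu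
          · have k1 := hP1 p hup; have k2 : (0:ℝ) ≤ c2 p := hc20 p; linarith
          · have k1 := hP2 p ⟨u, hu, hup⟩; have k2 : (0:ℝ) ≤ c1 p := hc10 p; linarith
  obtain ⟨c, s, hr, h0s, hsupp, hpos, heq, hP⟩ := comb U hUne (le_refl _)
  exact ⟨c, s, hr, h0s, hsupp, hpos, heq, hP⟩

lemma reachable_of_full (N : PetriNet P T) (U : Finset T) (hUne : U.Nonempty)
    (msrc mtgt : P → ℝ) (hsrc : 0 ≤ msrc) (htgt : 0 ≤ mtgt) (x : T → ℝ)
    (hx0 : ∀ t, 0 ≤ x t) (hxU : ∀ t ∈ U, 0 < x t) (hxs : ∀ t, t ∉ U → x t = 0)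
    (heq : ∀ p, mtgt p = msrc p + ∑ t ∈ U, x t * PetriNet.delta N t p)
    (hfw : ∀ t ∈ U, Fireable N ↑U msrc t)
    (hbw : ∀ t ∈ U, Fireable N.transpose ↑U mtgt t) :
    Reach N ↑U msrc mtgt := by
  classical
  obtain ⟨ch, sh, hrs, hs0, hssupp, hspos, hseq, hsP⟩ := primed N U hUne msrc hsrc hfw
  obtain ⟨vh, rh, hrt, hr0, hrsupp, hrpos, hreqT, hrP⟩ :=
    primed N.transpose U hUne mtgt htgt hbw
  -- translate the transposed equality
  have hreq : ∀ p, vh p = mtgt p - ∑ t ∈ U, rh t * PetriNet.delta N t p := by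
    intro p
    rw [hreqT p]
    have e : ∀ t ∈ U, rh t * PetriNet.delta N.transpose t p
        = - (rh t * PetriNet.delta N t p) := by
      intro t _
      rw [delta_transpose]; ring
    rw [Finset.sum_congr rfl e, Finset.sum_neg_distrib]
    ring
  have hvm : Reach N ↑U vh mtgt := reach_transpose.mp hrt
  -- positivity set
  have hPi : ∀ p, (∃ t ∈ U, 0 < N.pre t p) → 0 < ch p ∧ 0 < vh p := by
    intro p ⟨t, ht, hp⟩
    constructor
    · exact hsP p ⟨t, ht, by have := post_nonneg N t p; linarith⟩
    · refine hrP p ⟨t, ht, ?_⟩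
      have e1 : N.transpose.pre t p = N.post t p := rfl
      have e2 : N.transpose.post t p = N.pre t p := rfl
      rw [e1, e2]
      have := post_nonneg N t p
      linarith
  -- choose lam
  set lam : ℝ := min 1 (U.inf' hUne (fun t => x t / (sh t + rh t + 1))) with hlam
  have hlam0 : 0 < lam := by
    rw [hlam]
    apply lt_min one_pos
    rw [Finset.lt_inf'_iff]
    intro t ht
    have h1 := hxU t ht
    have h2 := hs0 t
    have h3 := hr0 t
    apply div_pos h1
    linarith
  have hlam1 : lam ≤ 1 := min_le_left _ _
  have hy0 : ∀ t, 0 ≤ x t - lam * (sh t + rh t) := by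
    intro t
    by_cases ht : t ∈ U
    · have h1 : lam ≤ x t / (sh t + rh t + 1) :=
        le_trans (min_le_right _ _) (Finset.inf'_le _ ht)
      have h2 := hs0 t
      have h3 := hr0 t
      have h4 := hxU t ht
      have h5 : 0 < sh t + rh t + 1 := by linarith
      rw [le_div_iff₀ h5] at h1
      nlinarith
    · rw [hxs t ht, hssupp t ht, hrsupp t ht]
      norm_num
  -- the two endpoints
  set A : P → ℝ := fun p => msrc p + lam * (ch p - msrc p) with hA
  set B : P → ℝ := fun p => mtgt p + lam * (vh p - mtgt p) with hB
  have hreachA : Reach N ↑U msrc A := reach_interp hrs hsrc hlam0 hlam1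
  have hreachB : Reach N ↑U B mtgt := by
    refine reach_transpose.mp (reach_interp ?_ htgt hlam0 hlam1)
    exact reach_transpose.mpr hvm
  have hch0 : 0 ≤ ch := reach_nonneg hrs hsrc
  have hvh0 : 0 ≤ vh := reach_nonneg hrt htgt
  have hA0 : 0 ≤ A := by
    intro p
    show (0:ℝ) ≤ msrc p + lam * (ch p - msrc p)
    have h1 : (0:ℝ) ≤ msrc p := hsrc p
    have h2 : (0:ℝ) ≤ ch p := hch0 p
    nlinarith
  have hB0 : 0 ≤ B := by
    intro p
    show (0:ℝ) ≤ mtgt p + lam * (vh p - mtgt p)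
    have h1 : (0:ℝ) ≤ mtgt p := htgt p
    have h2 : (0:ℝ) ≤ vh p := hvh0 p
    nlinarith
  set y : T → ℝ := fun t => x t - lam * (sh t + rh t) with hy
  have heq2 : ∀ p, B p = A p + ∑ t ∈ U, y t * PetriNet.delta N t p := by
    intro p
    show mtgt p + lam * (vh p - mtgt p)
        = msrc p + lam * (ch p - msrc p) + ∑ t ∈ U, y t * PetriNet.delta N t p
    have e1 : ∑ t ∈ U, y t * PetriNet.delta N t p
        = (∑ t ∈ U, x t * PetriNet.delta N t p)
          - lam * ((∑ t ∈ U, sh t * PetriNet.delta N t p)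
            + (∑ t ∈ U, rh t * PetriNet.delta N t p)) := by
      have e2 : ∀ t ∈ U, y t * PetriNet.delta N t p
          = x t * PetriNet.delta N t p
            - lam * (sh t * PetriNet.delta N t p + rh t * PetriNet.delta N t p) := by
        intro t _
        show (x t - lam * (sh t + rh t)) * PetriNet.delta N t p = _
        ring
      rw [Finset.sum_congr rfl e2, Finset.sum_sub_distrib, ← Finset.mul_sum,
        Finset.sum_add_distrib]
    rw [e1]
    have h1 := heq p
    have h2 := hseq p
    have h3 := hreq p
    linear_combination h1 + lam * h3 - lam * h2
  have hpos2 : ∀ p, 0 < ∑ t ∈ U, y t * N.pre t p → 0 < A p ∧ 0 < B p := by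
    intro p hp
    have hex : ∃ t ∈ U, 0 < y t * N.pre t p := by
      by_contra hcon
      push_neg at hcon
      have : ∑ t ∈ U, y t * N.pre t p ≤ 0 :=
        Finset.sum_nonpos (fun t ht => hcon t ht)
      linarith
    obtain ⟨t, ht, hprod⟩ := hex
    have hpre : 0 < N.pre t p := by
      rcases (pre_nonneg N t p).eq_or_lt with hh | hh
      · exfalso; rw [← hh, mul_zero] at hprod; exact lt_irrefl 0 hprod
      · exact hh
    obtain ⟨hc, hv⟩ := hPi p ⟨t, ht, hpre⟩
    constructor
    · show 0 < msrc p + lam * (ch p - msrc p)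
      have h1 : (0:ℝ) ≤ msrc p := hsrc p
      nlinarith [mul_pos hlam0 hc, mul_nonneg (by linarith : (0:ℝ) ≤ 1 - lam) h1]
    · show 0 < mtgt p + lam * (vh p - mtgt p)
      have h1 : (0:ℝ) ≤ mtgt p := htgt p
      nlinarith [mul_pos hlam0 hv, mul_nonneg (by linarith : (0:ℝ) ≤ 1 - lam) h1]
  have hmid : Reach N ↑U A B :=
    reach_of_schedule N U A B y (fun t => hy0 t) hA0 hB0 heq2 hpos2
  exact (hreachA.trans hmid).trans hreachB

end FullReach


section Atoms

/-- indicator vector of a set of places. -/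
def ind (Q : Set P) : P → ℝ := fun p => if p ∈ Q then 1 else 0

lemma ind_nonneg (Q : Set P) (p : P) : 0 ≤ ind Q p := by
  unfold ind; split <;> norm_num

lemma dot_zero_left (m : P → ℝ) : dot (fun _ => (0:ℝ)) m = 0 := by simp [dot]

lemma dot_neg_left (r m : P → ℝ) : dot (fun p => -r p) m = - dot r m := by
  simp [dot, Finset.sum_neg_distrib]

lemma dot_ind_nonneg (Q : Set P) {m : P → ℝ} (hm : 0 ≤ m) : 0 ≤ dot (ind Q) m :=
  Finset.sum_nonneg fun p _ => mul_nonneg (ind_nonneg Q p) (hm p)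

lemma dot_ind_zero (Q : Set P) {m : P → ℝ} (hm : 0 ≤ m) (h : dot (ind Q) m ≤ 0) :
    ∀ p ∈ Q, m p = 0 := by
  intro p hp
  have hz : dot (ind Q) m = 0 := le_antisymm h (dot_ind_nonneg Q hm)
  have := (Finset.sum_eq_zero_iff_of_nonneg
    (fun q _ => mul_nonneg (ind_nonneg Q q) (hm q))).mp hz p (Finset.mem_univ p)
  unfold ind at this
  rw [if_pos hp, one_mul] at this
  exact this

lemma dot_ind_le_zero (Q : Set P) {m : P → ℝ} (h : ∀ p ∈ Q, m p = 0) :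
    dot (ind Q) m ≤ 0 := by
  have : dot (ind Q) m = 0 := by
    apply Finset.sum_eq_zero
    intro p _
    unfold ind
    split
    · rename_i hp; rw [h p hp]; ring
    · ring
  linarith [this]

lemma dot_ind_pos (Q : Set P) {m : P → ℝ} (hm : 0 ≤ m) (h : ∃ p ∈ Q, 0 < m p) :
    0 < dot (ind Q) m := by
  obtain ⟨p, hp, hmp⟩ := h
  refine Finset.sum_pos' (fun q _ => mul_nonneg (ind_nonneg Q q) (hm q))
    ⟨p, Finset.mem_univ p, ?_⟩
  unfold ind
  rw [if_pos hp, one_mul]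
  exact hmp

lemma dot_ind_pos_elim (Q : Set P) {m : P → ℝ} (hm : 0 ≤ m) (h : 0 < dot (ind Q) m) :
    ∃ p ∈ Q, 0 < m p := by
  by_contra hcon
  push_neg at hcon
  have : ∀ p ∈ Q, m p = 0 := fun p hp => le_antisymm (hcon p hp) (hm p)
  linarith [dot_ind_le_zero Q this]

/-- "second marking vanishes on Q" -/
def aZ2 (Q : Set P) : Atom P := ⟨fun _ => 0, ind Q, 0, false⟩
/-- "first marking is positive somewhere on Q" -/
def aP1 (Q : Set P) : Atom P := ⟨fun p => -ind Q p, fun _ => 0, 0, true⟩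
/-- "first marking vanishes on Q" -/
def aZ1 (Q : Set P) : Atom P := ⟨ind Q, fun _ => 0, 0, false⟩
/-- "second marking is positive somewhere on Q" -/
def aP2 (Q : Set P) : Atom P := ⟨fun _ => 0, fun p => -ind Q p, 0, true⟩
/-- "r · m' ∼ r · m" -/
def aD (r : P → ℝ) (st : Bool) : Atom P := ⟨fun p => -r p, r, 0, st⟩

lemma mem_sol_iff {a a' : P → ℝ} {st : Bool} {mm : (P → ℝ) × (P → ℝ)} :
    mm ∈ Atom.sol ⟨a, a', 0, st⟩ ↔ 0 ≤ mm.1 ∧ 0 ≤ mm.2 ∧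
      (if st then dot a mm.1 + dot a' mm.2 < 0 else dot a mm.1 + dot a' mm.2 ≤ 0) :=
  Iff.rfl

lemma mem_sol_aZ2 {Q : Set P} {mm : (P → ℝ) × (P → ℝ)} :
    mm ∈ (aZ2 Q).sol ↔ 0 ≤ mm.1 ∧ 0 ≤ mm.2 ∧ dot (ind Q) mm.2 ≤ 0 := by
  unfold aZ2
  rw [mem_sol_iff]
  rw [if_neg Bool.false_ne_true]
  rw [dot_zero_left]
  constructor
  · rintro ⟨h1, h2, h3⟩; exact ⟨h1, h2, by linarith⟩
  · rintro ⟨h1, h2, h3⟩; exact ⟨h1, h2, by linarith⟩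

lemma mem_sol_aZ1 {Q : Set P} {mm : (P → ℝ) × (P → ℝ)} :
    mm ∈ (aZ1 Q).sol ↔ 0 ≤ mm.1 ∧ 0 ≤ mm.2 ∧ dot (ind Q) mm.1 ≤ 0 := by
  unfold aZ1
  rw [mem_sol_iff]
  rw [if_neg Bool.false_ne_true]
  rw [dot_zero_left]
  constructor
  · rintro ⟨h1, h2, h3⟩; exact ⟨h1, h2, by linarith⟩
  · rintro ⟨h1, h2, h3⟩; exact ⟨h1, h2, by linarith⟩

lemma mem_sol_aP1 {Q : Set P} {mm : (P → ℝ) × (P → ℝ)} :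
    mm ∈ (aP1 Q).sol ↔ 0 ≤ mm.1 ∧ 0 ≤ mm.2 ∧ 0 < dot (ind Q) mm.1 := by
  unfold aP1
  rw [mem_sol_iff]
  rw [if_pos rfl]
  rw [dot_zero_left, dot_neg_left]
  constructor
  · rintro ⟨h1, h2, h3⟩; exact ⟨h1, h2, by linarith⟩
  · rintro ⟨h1, h2, h3⟩; exact ⟨h1, h2, by linarith⟩

lemma mem_sol_aP2 {Q : Set P} {mm : (P → ℝ) × (P → ℝ)} :
    mm ∈ (aP2 Q).sol ↔ 0 ≤ mm.1 ∧ 0 ≤ mm.2 ∧ 0 < dot (ind Q) mm.2 := by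
  unfold aP2
  rw [mem_sol_iff]
  rw [if_pos rfl]
  rw [dot_zero_left, dot_neg_left]
  constructor
  · rintro ⟨h1, h2, h3⟩; exact ⟨h1, h2, by linarith⟩
  · rintro ⟨h1, h2, h3⟩; exact ⟨h1, h2, by linarith⟩

lemma mem_sol_aD {r : P → ℝ} {st : Bool} {mm : (P → ℝ) × (P → ℝ)} :
    mm ∈ (aD r st).sol ↔ 0 ≤ mm.1 ∧ 0 ≤ mm.2 ∧
      (if st then dot r mm.2 < dot r mm.1 else dot r mm.2 ≤ dot r mm.1) := by
  unfold aD
  rw [mem_sol_iff]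
  rw [dot_neg_left]
  rcases Bool.eq_false_or_eq_true st with rfl | rfl
  · rw [if_pos rfl, if_pos rfl]
    constructor
    · rintro ⟨h1, h2, h3⟩; exact ⟨h1, h2, by linarith⟩
    · rintro ⟨h1, h2, h3⟩; exact ⟨h1, h2, by linarith⟩
  · rw [if_neg Bool.false_ne_true, if_neg Bool.false_ne_true]
    constructor
    · rintro ⟨h1, h2, h3⟩; exact ⟨h1, h2, by linarith⟩
    · rintro ⟨h1, h2, h3⟩; exact ⟨h1, h2, by linarith⟩

lemma atom_timplies_le (M : PetriNet P T) (t : T) (a a' : P → ℝ) (st : Bool)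
    (h : dot a' (PetriNet.delta M t) ≤ 0) :
    Atom.timplies M t ⟨a, a', 0, st⟩ ⟨a, a', 0, st⟩ := by
  intro m m' m'' α hsol hfire
  rw [mem_sol_iff] at hsol
  obtain ⟨h1, h2, h3⟩ := hsol
  refine mem_sol_iff.mpr ⟨h1, fire_nonneg hfire, ?_⟩
  have hd := dot_fire hfire a'
  have hprod : α * dot a' (PetriNet.delta M t) ≤ 0 :=
    mul_nonpos_of_nonneg_of_nonpos hfire.1.le h
  rcases Bool.eq_false_or_eq_true st with rfl | rfl
  · rw [if_pos rfl] at h3 ⊢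
    simp only at h3 ⊢
    linarith
  · rw [if_neg Bool.false_ne_true] at h3 ⊢
    simp only at h3 ⊢
    linarith

lemma atom_timplies_lt (M : PetriNet P T) (t : T) (a a' : P → ℝ) (st : Bool)
    (h : dot a' (PetriNet.delta M t) < 0) :
    Atom.timplies M t ⟨a, a', 0, st⟩ ⟨a, a', 0, true⟩ := by
  intro m m' m'' α hsol hfire
  rw [mem_sol_iff] at hsol
  obtain ⟨h1, h2, h3⟩ := hsol
  refine mem_sol_iff.mpr ⟨h1, fire_nonneg hfire, ?_⟩
  have hd := dot_fire hfire a'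
  have hprod : α * dot a' (PetriNet.delta M t) < 0 :=
    mul_neg_of_pos_of_neg hfire.1 h
  rw [if_pos rfl]
  rcases Bool.eq_false_or_eq_true st with rfl | rfl
  · rw [if_pos rfl] at h3
    simp only at h3 ⊢
    linarith
  · rw [if_neg Bool.false_ne_true] at h3
    simp only at h3 ⊢
    linarith

lemma fire_pre_zero {M : PetriNet P T} {t : T} {α : ℝ} {m' m'' : P → ℝ}
    (hfire : M.fire t α m' m'') {q : P} (hq : m' q = 0) : M.pre t q = 0 := by
  have h1 := hfire.2.1 q
  have h2 := pre_nonneg M t q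
  have h3 := hfire.1
  nlinarith

lemma atom_timplies_aZ2 (M : PetriNet P T) (t' : T) (Q : Set P)
    (hsi : (∃ q ∈ Q, 0 < M.post t' q) → ∃ q ∈ Q, 0 < M.pre t' q) :
    Atom.timplies M t' (aZ2 Q) (aZ2 Q) := by
  intro m m' m'' α hsol hfire
  rw [mem_sol_aZ2] at hsol
  obtain ⟨h1, h2, h3⟩ := hsol
  have hz : ∀ p ∈ Q, m' p = 0 := dot_ind_zero Q h2 h3
  have hpre : ∀ q ∈ Q, M.pre t' q = 0 := fun q hq => fire_pre_zero hfire (hz q hq)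
  have hpost : ∀ q ∈ Q, M.post t' q = 0 := by
    by_contra hcon
    push_neg at hcon
    obtain ⟨q, hq, hqne⟩ := hcon
    obtain ⟨q', hq', hq'pos⟩ := hsi ⟨q, hq, lt_of_le_of_ne (post_nonneg M t' q) (Ne.symm hqne)⟩
    rw [hpre q' hq'] at hq'pos
    exact lt_irrefl 0 hq'pos
  refine mem_sol_aZ2.mpr ⟨h1, fire_nonneg hfire, ?_⟩
  apply dot_ind_le_zero
  intro p hp
  show m'' p = 0
  rw [hfire.2.2 p, hz p hp, hpre p hp, hpost p hp]
  ring

lemma atom_timplies_aP2 (M : PetriNet P T) (t' : T) (Q : Set P)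
    (htr : (∃ q ∈ Q, 0 < M.pre t' q) → ∃ q ∈ Q, 0 < M.post t' q) :
    Atom.timplies M t' (aP2 Q) (aP2 Q) := by
  intro m m' m'' α hsol hfire
  rw [mem_sol_aP2] at hsol
  obtain ⟨h1, h2, h3⟩ := hsol
  have hm''0 : 0 ≤ m'' := fire_nonneg hfire
  refine mem_sol_aP2.mpr ⟨h1, hm''0, ?_⟩
  apply dot_ind_pos Q hm''0
  by_cases hp : ∃ q ∈ Q, 0 < M.pre t' q
  · obtain ⟨q1, hq1, hq1pos⟩ := htr hp
    refine ⟨q1, hq1, ?_⟩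
    show 0 < m'' q1
    rw [hfire.2.2 q1]
    have hb := hfire.2.1 q1
    have := hfire.1
    nlinarith
  · push_neg at hp
    obtain ⟨q, hq, hqpos⟩ := dot_ind_pos_elim Q h2 h3
    refine ⟨q, hq, ?_⟩
    show 0 < m'' q
    rw [hfire.2.2 q]
    have hpre0 : M.pre t' q = 0 := le_antisymm (hp q hq) (pre_nonneg M t' q)
    have hpost0 := post_nonneg M t' q
    have := hfire.1
    nlinarith

lemma atom_timplies_blocked (M : PetriNet P T) (t : T) (Q : Set P)
    (hq : ∃ q ∈ Q, 0 < M.pre t q) (ψ' : Atom P) :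
    Atom.timplies M t (aZ2 Q) ψ' := by
  intro m m' m'' α hsol hfire
  exfalso
  rw [mem_sol_aZ2] at hsol
  obtain ⟨h1, h2, h3⟩ := hsol
  have hz : ∀ p ∈ Q, m' p = 0 := dot_ind_zero Q h2 h3
  obtain ⟨q, hqQ, hqpos⟩ := hq
  have := fire_pre_zero hfire (hz q hqQ)
  rw [this] at hqpos
  exact lt_irrefl 0 hqpos

lemma atom_timplies_to_aP2 (M : PetriNet P T) (t : T) (Q : Set P)
    (hq : ∃ q ∈ Q, 0 < M.post t q) (ψ : Atom P) :
    Atom.timplies M t ψ (aP2 Q) := by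
  intro m m' m'' α hsol hfire
  have h1 : 0 ≤ m := hsol.1
  have hm''0 : 0 ≤ m'' := fire_nonneg hfire
  refine mem_sol_aP2.mpr ⟨h1, hm''0, ?_⟩
  apply dot_ind_pos Q hm''0
  obtain ⟨q, hqQ, hqpos⟩ := hq
  refine ⟨q, hqQ, ?_⟩
  show 0 < m'' q
  rw [hfire.2.2 q]
  have hb := hfire.2.1 q
  have := hfire.1
  nlinarith

end Atoms

section Constructions

lemma pre_transpose (N : PetriNet P T) (t : T) : N.transpose.pre t = N.post t := rfl

lemma post_transpose (N : PetriNet P T) (t : T) : N.transpose.post t = N.pre t := rfl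

lemma dot_delta_transpose (N : PetriNet P T) (t : T) (r : P → ℝ) :
    dot (fun p => - r p) (PetriNet.delta N.transpose t) = dot r (PetriNet.delta N t) := by
  unfold dot
  apply Finset.sum_congr rfl
  intro p _
  rw [delta_transpose]
  ring

/-- The conclusion of the main theorem, abbreviated. -/
def Sep (N : PetriNet P T) (U : Finset T) (msrc mtgt : P → ℝ) : Prop :=
  ∃ φ : List (List (Atom P)),
    LocallyClosedOn N ↑U φ ∧ (msrc, msrc) ∈ Formula.sol φ ∧
    (mtgt, mtgt) ∈ Formula.sol φ ∧ (msrc, mtgt) ∉ Formula.sol φ ∧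
    φ.length ≤ 2 * U.card + 1 ∧ ∀ c ∈ φ, c.length ≤ 2 * U.card + 1

lemma sep_farkas (N : PetriNet P T) (U : Finset T) (msrc mtgt : P → ℝ)
    (hsrc : 0 ≤ msrc) (htgt : 0 ≤ mtgt) (r : P → ℝ)
    (hrU : ∀ t ∈ U, dot r (PetriNet.delta N t) ≤ 0)
    (hrpos : dot r msrc < dot r mtgt) : Sep N U msrc mtgt := by
  have hmem : ∀ m m' : P → ℝ, 0 ≤ m → 0 ≤ m' → dot r m' ≤ dot r m →
      (m, m') ∈ (aD r false).sol := by
    intro m m' h1 h2 h3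
    refine mem_sol_aD.mpr ⟨h1, h2, ?_⟩
    rw [if_neg Bool.false_ne_true]
    exact h3
  refine ⟨[[aD r false]], ⟨?_, ?_, ?_⟩, ?_, ?_, ?_, ?_, ?_⟩
  · intro c hc ψ hψ
    simp only [List.mem_singleton] at hc
    subst hc
    simp only [List.mem_singleton] at hψ
    subst hψ
    rfl
  · intro t ht c hc
    refine ⟨c, hc, ?_⟩
    simp only [List.mem_singleton] at hc
    subst hc
    intro ψ' hψ'
    simp only [List.mem_singleton] at hψ'
    subst hψ'
    exact ⟨aD r false, List.mem_singleton_self _,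
      atom_timplies_le N t (fun p => -r p) r false (hrU t ht)⟩
  · intro t ht c hc
    refine ⟨c, hc, ?_⟩
    simp only [List.mem_singleton] at hc
    subst hc
    intro ψ' hψ'
    simp only [List.map_cons, List.map_nil, List.mem_singleton] at hψ'
    subst hψ'
    refine ⟨(aD r false).transpose, by simp, ?_⟩
    have hcond : dot (fun p => - r p) (PetriNet.delta N.transpose t) ≤ 0 := by
      rw [dot_delta_transpose]
      exact hrU t ht
    exact atom_timplies_le N.transpose t r (fun p => -r p) false hcond
  · refine ⟨[aD r false], List.mem_singleton_self _, ?_⟩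
    intro ψ hψ
    simp only [List.mem_singleton] at hψ
    subst hψ
    exact hmem msrc msrc hsrc hsrc (le_refl _)
  · refine ⟨[aD r false], List.mem_singleton_self _, ?_⟩
    intro ψ hψ
    simp only [List.mem_singleton] at hψ
    subst hψ
    exact hmem mtgt mtgt htgt htgt (le_refl _)
  · rintro ⟨c, hc, hall⟩
    simp only [List.mem_singleton] at hc
    subst hc
    have := hall (aD r false) (List.mem_singleton_self _)
    rw [mem_sol_aD] at this
    obtain ⟨_, _, h3⟩ := this
    rw [if_neg Bool.false_ne_true] at h3
    simp only at h3
    linarith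
  · simp
  · intro c hc
    simp only [List.mem_singleton] at hc
    subst hc
    simp

lemma sep_face (N : PetriNet P T) (U : Finset T) (msrc mtgt : P → ℝ)
    (hsrc : 0 ≤ msrc) (htgt : 0 ≤ mtgt) {t' : T} (ht' : t' ∈ U) (r : P → ℝ)
    (hrU : ∀ t ∈ U, dot r (PetriNet.delta N t) ≤ 0)
    (hrt' : dot r (PetriNet.delta N t') < 0)
    (hr0 : dot r mtgt = dot r msrc)
    (hrec : Sep N (U.erase t') msrc mtgt) : Sep N U msrc mtgt := by
  obtain ⟨φ', ⟨hb', hfwd', hbwd'⟩, hd1', hd2', hnot', hlen', hclen'⟩ := hrec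
  have hcard : U.erase t' ⊆ U := Finset.erase_subset t' U
  refine ⟨[aD r true] :: φ'.map (fun c => aD r false :: c), ⟨?_, ?_, ?_⟩, ?_, ?_, ?_, ?_, ?_⟩
  · -- homogeneous
    intro c hc ψ hψ
    rcases List.mem_cons.mp hc with rfl | hc
    · simp only [List.mem_singleton] at hψ
      subst hψ; rfl
    · obtain ⟨c0, hc0, rfl⟩ := List.mem_map.mp hc
      rcases List.mem_cons.mp hψ with rfl | hψ
      · rfl
      · exact hb' c0 hc0 ψ hψ
  · -- forward closure
    intro t ht c hc
    have htU : t ∈ U := ht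
    rcases List.mem_cons.mp hc with rfl | hc
    · refine ⟨[aD r true], List.mem_cons_self, ?_⟩
      intro ψ' hψ'
      simp only [List.mem_singleton] at hψ'
      subst hψ'
      exact ⟨aD r true, List.mem_singleton_self _,
        atom_timplies_le N t (fun p => -r p) r true (hrU t htU)⟩
    · obtain ⟨c0, hc0, rfl⟩ := List.mem_map.mp hc
      by_cases htt : t = t'
      · subst htt
        refine ⟨[aD r true], List.mem_cons_self, ?_⟩
        intro ψ' hψ'
        simp only [List.mem_singleton] at hψ'
        subst hψ'
        exact ⟨aD r false, List.mem_cons_self,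
          atom_timplies_lt N t (fun p => -r p) r false hrt'⟩
      · obtain ⟨c1, hc1, himp⟩ := hfwd' t
          (by simp only [Finset.coe_erase, Set.mem_diff, Set.mem_singleton_iff]
              exact ⟨htU, htt⟩) c0 hc0
        refine ⟨aD r false :: c1, List.mem_cons_of_mem _ (List.mem_map_of_mem hc1), ?_⟩
        intro ψ' hψ'
        rcases List.mem_cons.mp hψ' with rfl | hψ'
        · exact ⟨aD r false, List.mem_cons_self,
            atom_timplies_le N t (fun p => -r p) r false (hrU t htU)⟩
        · obtain ⟨ψ, hψ, hti⟩ := himp ψ' hψ'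
          exact ⟨ψ, List.mem_cons_of_mem _ hψ, hti⟩
  · -- backward closure
    intro t ht c hc
    have htU : t ∈ U := ht
    have hcondle : dot (fun p => - r p) (PetriNet.delta N.transpose t) ≤ 0 := by
      rw [dot_delta_transpose]; exact hrU t htU
    rcases List.mem_cons.mp hc with rfl | hc
    · refine ⟨[aD r true], List.mem_cons_self, ?_⟩
      intro ψ' hψ'
      simp only [List.map_cons, List.map_nil, List.mem_singleton] at hψ'
      subst hψ'
      exact ⟨(aD r true).transpose, by simp,
        atom_timplies_le N.transpose t r (fun p => -r p) true hcondle⟩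
    · obtain ⟨c0, hc0, rfl⟩ := List.mem_map.mp hc
      by_cases htt : t = t'
      · subst htt
        refine ⟨[aD r true], List.mem_cons_self, ?_⟩
        intro ψ' hψ'
        simp only [List.map_cons, List.map_nil, List.mem_singleton] at hψ'
        subst hψ'
        have hcondlt : dot (fun p => - r p) (PetriNet.delta N.transpose t) < 0 := by
          rw [dot_delta_transpose]; exact hrt'
        exact ⟨(aD r false).transpose, by simp,
          atom_timplies_lt N.transpose t r (fun p => -r p) false hcondlt⟩
      · obtain ⟨c1, hc1, himp⟩ := hbwd' t
          (by simp only [Finset.coe_erase, Set.mem_diff, Set.mem_singleton_iff]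
              exact ⟨htU, htt⟩) c0 hc0
        refine ⟨aD r false :: c1, List.mem_cons_of_mem _ (List.mem_map_of_mem hc1), ?_⟩
        intro ψ' hψ'
        simp only [List.map_cons] at hψ'
        rcases List.mem_cons.mp hψ' with rfl | hψ'
        · refine ⟨(aD r false).transpose, by simp, ?_⟩
          exact atom_timplies_le N.transpose t r (fun p => -r p) false hcondle
        · obtain ⟨ψ, hψ, hti⟩ := himp ψ' hψ'
          refine ⟨ψ, ?_, hti⟩
          simp only [List.map_cons]
          exact List.mem_cons_of_mem _ hψ
  · -- diag src
    obtain ⟨c0, hc0, hall⟩ := hd1'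
    refine ⟨aD r false :: c0, List.mem_cons_of_mem _ (List.mem_map_of_mem hc0), ?_⟩
    intro ψ hψ
    rcases List.mem_cons.mp hψ with rfl | hψ
    · refine mem_sol_aD.mpr ⟨hsrc, hsrc, ?_⟩
      rw [if_neg Bool.false_ne_true]
    · exact hall ψ hψ
  · -- diag tgt
    obtain ⟨c0, hc0, hall⟩ := hd2'
    refine ⟨aD r false :: c0, List.mem_cons_of_mem _ (List.mem_map_of_mem hc0), ?_⟩
    intro ψ hψ
    rcases List.mem_cons.mp hψ with rfl | hψ
    · refine mem_sol_aD.mpr ⟨htgt, htgt, ?_⟩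
      rw [if_neg Bool.false_ne_true]
    · exact hall ψ hψ
  · -- separation
    rintro ⟨c, hc, hall⟩
    rcases List.mem_cons.mp hc with rfl | hc
    · have := hall (aD r true) (List.mem_singleton_self _)
      rw [mem_sol_aD] at this
      obtain ⟨_, _, h3⟩ := this
      rw [if_pos rfl] at h3
      simp only at h3
      linarith
    · obtain ⟨c0, hc0, rfl⟩ := List.mem_map.mp hc
      refine hnot' ⟨c0, hc0, ?_⟩
      intro ψ hψ
      exact hall ψ (List.mem_cons_of_mem _ hψ)
  · -- length
    have h1 : (U.erase t').card = U.card - 1 := Finset.card_erase_of_mem ht'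
    have h2 : 1 ≤ U.card := Finset.card_pos.mpr ⟨t', ht'⟩
    have h3 : φ'.length ≤ 2 * (U.card - 1) + 1 := by rw [← h1]; exact hlen'
    simp only [List.length_cons, List.length_map]
    omega
  · -- clause lengths
    intro c hc
    have h1 : (U.erase t').card = U.card - 1 := Finset.card_erase_of_mem ht'
    have h2 : 1 ≤ U.card := Finset.card_pos.mpr ⟨t', ht'⟩
    rcases List.mem_cons.mp hc with rfl | hc
    · simp only [List.length_singleton]
      omega
    · obtain ⟨c0, hc0, rfl⟩ := List.mem_map.mp hc
      have h3 : c0.length ≤ 2 * (U.card - 1) + 1 := by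
        have := hclen' c0 hc0
        rwa [h1] at this
      simp only [List.length_cons]
      omega

lemma sep_siphon2 (N : PetriNet P T) (U : Finset T) (msrc mtgt : P → ℝ)
    (hsrc : 0 ≤ msrc) (htgt : 0 ≤ mtgt) (Q : Set P) (hU1 : 1 ≤ U.card)
    (hQsrc : ∀ p ∈ Q, msrc p = 0) (hQtgt : ∃ p ∈ Q, 0 < mtgt p)
    (hsi : ∀ t' ∈ U, (∃ q ∈ Q, 0 < N.post t' q) → (∃ q ∈ Q, 0 < N.pre t' q)) :
    Sep N U msrc mtgt := by
  refine ⟨[[aZ2 Q], [aP1 Q]], ⟨?_, ?_, ?_⟩, ?_, ?_, ?_, ?_, ?_⟩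
  · intro c hc ψ hψ
    rcases List.mem_cons.mp hc with rfl | hc
    · simp only [List.mem_singleton] at hψ; subst hψ; rfl
    · simp only [List.mem_singleton] at hc; subst hc
      simp only [List.mem_singleton] at hψ; subst hψ; rfl
  · intro t ht c hc
    have htU : t ∈ U := ht
    refine ⟨c, hc, ?_⟩
    rcases List.mem_cons.mp hc with rfl | hc
    · intro ψ' hψ'
      simp only [List.mem_singleton] at hψ'; subst hψ'
      exact ⟨aZ2 Q, List.mem_singleton_self _, atom_timplies_aZ2 N t Q (hsi t htU)⟩
    · simp only [List.mem_singleton] at hc; subst hc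
      intro ψ' hψ'
      simp only [List.mem_singleton] at hψ'; subst hψ'
      exact ⟨aP1 Q, List.mem_singleton_self _,
        atom_timplies_le N t (fun p => -ind Q p) (fun _ => 0) true
          (le_of_eq (dot_zero_left _))⟩
  · intro t ht c hc
    have htU : t ∈ U := ht
    refine ⟨c, hc, ?_⟩
    rcases List.mem_cons.mp hc with rfl | hc
    · intro ψ' hψ'
      simp only [List.map_cons, List.map_nil, List.mem_singleton] at hψ'; subst hψ'
      refine ⟨(aZ2 Q).transpose, by simp, ?_⟩
      exact atom_timplies_le N.transpose t (ind Q) (fun _ => 0) false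
        (le_of_eq (dot_zero_left _))
    · simp only [List.mem_singleton] at hc; subst hc
      intro ψ' hψ'
      simp only [List.map_cons, List.map_nil, List.mem_singleton] at hψ'; subst hψ'
      refine ⟨(aP1 Q).transpose, by simp, ?_⟩
      exact atom_timplies_aP2 N.transpose t Q (hsi t htU)
  · refine ⟨[aZ2 Q], List.mem_cons_self, ?_⟩
    intro ψ hψ
    simp only [List.mem_singleton] at hψ; subst hψ
    exact mem_sol_aZ2.mpr ⟨hsrc, hsrc, dot_ind_le_zero Q hQsrc⟩
  · refine ⟨[aP1 Q], List.mem_cons_of_mem _ (List.mem_singleton_self _), ?_⟩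
    intro ψ hψ
    simp only [List.mem_singleton] at hψ; subst hψ
    exact mem_sol_aP1.mpr ⟨htgt, htgt, dot_ind_pos Q htgt hQtgt⟩
  · rintro ⟨c, hc, hall⟩
    rcases List.mem_cons.mp hc with rfl | hc
    · have := hall (aZ2 Q) (List.mem_singleton_self _)
      rw [mem_sol_aZ2] at this
      obtain ⟨p, hp, hppos⟩ := hQtgt
      have := dot_ind_zero Q htgt this.2.2 p hp
      linarith
    · simp only [List.mem_singleton] at hc; subst hc
      have := hall (aP1 Q) (List.mem_singleton_self _)
      rw [mem_sol_aP1] at this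
      obtain ⟨p, hp, hppos⟩ := dot_ind_pos_elim Q hsrc this.2.2
      rw [hQsrc p hp] at hppos
      exact lt_irrefl 0 hppos
  · simp only [List.length_cons, List.length_singleton, List.length_nil]
    omega
  · intro c hc
    rcases List.mem_cons.mp hc with rfl | hc
    · simp only [List.length_singleton]; omega
    · simp only [List.mem_singleton] at hc; subst hc
      simp only [List.length_singleton]; omega

lemma sep_siphon_rec (N : PetriNet P T) (U : Finset T) (msrc mtgt : P → ℝ)
    (hsrc : 0 ≤ msrc) (htgt : 0 ≤ mtgt) (Q : Set P) {t : T} (ht : t ∈ U)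
    (hQsrc : ∀ p ∈ Q, msrc p = 0) (hQtgt : ∀ p ∈ Q, mtgt p = 0)
    (hpre_t : ∃ q ∈ Q, 0 < N.pre t q)
    (hsi : ∀ t' ∈ U, (∃ q ∈ Q, 0 < N.post t' q) → (∃ q ∈ Q, 0 < N.pre t' q))
    (hrec : Sep N (U.erase t) msrc mtgt) : Sep N U msrc mtgt := by
  obtain ⟨φ', ⟨hb', hfwd', hbwd'⟩, hd1', hd2', hnot', hlen', hclen'⟩ := hrec
  refine ⟨[aP1 Q] :: φ'.map (fun c => aZ2 Q :: c), ⟨?_, ?_, ?_⟩, ?_, ?_, ?_, ?_, ?_⟩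
  · intro c hc ψ hψ
    rcases List.mem_cons.mp hc with rfl | hc
    · simp only [List.mem_singleton] at hψ; subst hψ; rfl
    · obtain ⟨c0, hc0, rfl⟩ := List.mem_map.mp hc
      rcases List.mem_cons.mp hψ with rfl | hψ
      · rfl
      · exact hb' c0 hc0 ψ hψ
  · -- forward
    intro t'' ht'' c hc
    have htU : t'' ∈ U := ht''
    rcases List.mem_cons.mp hc with rfl | hc
    · refine ⟨[aP1 Q], List.mem_cons_self, ?_⟩
      intro ψ' hψ'
      simp only [List.mem_singleton] at hψ'; subst hψ'
      exact ⟨aP1 Q, List.mem_singleton_self _,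
        atom_timplies_le N t'' (fun p => -ind Q p) (fun _ => 0) true
          (le_of_eq (dot_zero_left _))⟩
    · obtain ⟨c0, hc0, rfl⟩ := List.mem_map.mp hc
      by_cases htt : t'' = t
      · subst htt
        refine ⟨aZ2 Q :: c0, List.mem_cons_of_mem _ (List.mem_map_of_mem hc0), ?_⟩
        intro ψ' hψ'
        exact ⟨aZ2 Q, List.mem_cons_self, atom_timplies_blocked N t'' Q hpre_t ψ'⟩
      · obtain ⟨c1, hc1, himp⟩ := hfwd' t''
          (by simp only [Finset.coe_erase, Set.mem_diff, Set.mem_singleton_iff]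
              exact ⟨htU, htt⟩) c0 hc0
        refine ⟨aZ2 Q :: c1, List.mem_cons_of_mem _ (List.mem_map_of_mem hc1), ?_⟩
        intro ψ' hψ'
        rcases List.mem_cons.mp hψ' with rfl | hψ'
        · exact ⟨aZ2 Q, List.mem_cons_self, atom_timplies_aZ2 N t'' Q (hsi t'' htU)⟩
        · obtain ⟨ψ, hψ, hti⟩ := himp ψ' hψ'
          exact ⟨ψ, List.mem_cons_of_mem _ hψ, hti⟩
  · -- backward
    intro t'' ht'' c hc
    have htU : t'' ∈ U := ht''
    rcases List.mem_cons.mp hc with rfl | hc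
    · refine ⟨[aP1 Q], List.mem_cons_self, ?_⟩
      intro ψ' hψ'
      simp only [List.map_cons, List.map_nil, List.mem_singleton] at hψ'; subst hψ'
      refine ⟨(aP1 Q).transpose, by simp, ?_⟩
      exact atom_timplies_aP2 N.transpose t'' Q (hsi t'' htU)
    · obtain ⟨c0, hc0, rfl⟩ := List.mem_map.mp hc
      by_cases htt : t'' = t
      · subst htt
        refine ⟨[aP1 Q], List.mem_cons_self, ?_⟩
        intro ψ' hψ'
        simp only [List.map_cons, List.map_nil, List.mem_singleton] at hψ'; subst hψ'
        refine ⟨(aZ2 Q).transpose, by simp, ?_⟩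
        exact atom_timplies_to_aP2 N.transpose t'' Q hpre_t (aZ2 Q).transpose
      · obtain ⟨c1, hc1, himp⟩ := hbwd' t''
          (by simp only [Finset.coe_erase, Set.mem_diff, Set.mem_singleton_iff]
              exact ⟨htU, htt⟩) c0 hc0
        refine ⟨aZ2 Q :: c1, List.mem_cons_of_mem _ (List.mem_map_of_mem hc1), ?_⟩
        intro ψ' hψ'
        simp only [List.map_cons] at hψ'
        rcases List.mem_cons.mp hψ' with rfl | hψ'
        · refine ⟨(aZ2 Q).transpose, by simp, ?_⟩
          exact atom_timplies_le N.transpose t'' (ind Q) (fun _ => 0) false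
            (le_of_eq (dot_zero_left _))
        · obtain ⟨ψ, hψ, hti⟩ := himp ψ' hψ'
          refine ⟨ψ, ?_, hti⟩
          simp only [List.map_cons]
          exact List.mem_cons_of_mem _ hψ
  · obtain ⟨c0, hc0, hall⟩ := hd1'
    refine ⟨aZ2 Q :: c0, List.mem_cons_of_mem _ (List.mem_map_of_mem hc0), ?_⟩
    intro ψ hψ
    rcases List.mem_cons.mp hψ with rfl | hψ
    · exact mem_sol_aZ2.mpr ⟨hsrc, hsrc, dot_ind_le_zero Q hQsrc⟩
    · exact hall ψ hψ
  · obtain ⟨c0, hc0, hall⟩ := hd2'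
    refine ⟨aZ2 Q :: c0, List.mem_cons_of_mem _ (List.mem_map_of_mem hc0), ?_⟩
    intro ψ hψ
    rcases List.mem_cons.mp hψ with rfl | hψ
    · exact mem_sol_aZ2.mpr ⟨htgt, htgt, dot_ind_le_zero Q hQtgt⟩
    · exact hall ψ hψ
  · rintro ⟨c, hc, hall⟩
    rcases List.mem_cons.mp hc with rfl | hc
    · have := hall (aP1 Q) (List.mem_singleton_self _)
      rw [mem_sol_aP1] at this
      obtain ⟨p, hp, hppos⟩ := dot_ind_pos_elim Q hsrc this.2.2
      rw [hQsrc p hp] at hppos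
      exact lt_irrefl 0 hppos
    · obtain ⟨c0, hc0, rfl⟩ := List.mem_map.mp hc
      refine hnot' ⟨c0, hc0, ?_⟩
      intro ψ hψ
      exact hall ψ (List.mem_cons_of_mem _ hψ)
  · have h1 : (U.erase t).card = U.card - 1 := Finset.card_erase_of_mem ht
    have h2 : 1 ≤ U.card := Finset.card_pos.mpr ⟨t, ht⟩
    have h3 : φ'.length ≤ 2 * (U.card - 1) + 1 := by rw [← h1]; exact hlen'
    simp only [List.length_cons, List.length_map]
    omega
  · intro c hc
    have h1 : (U.erase t).card = U.card - 1 := Finset.card_erase_of_mem ht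
    have h2 : 1 ≤ U.card := Finset.card_pos.mpr ⟨t, ht⟩
    rcases List.mem_cons.mp hc with rfl | hc
    · simp only [List.length_singleton]; omega
    · obtain ⟨c0, hc0, rfl⟩ := List.mem_map.mp hc
      have h3 : c0.length ≤ 2 * (U.card - 1) + 1 := by
        have := hclen' c0 hc0
        rwa [h1] at this
      simp only [List.length_cons]
      omega

lemma sep_trap2 (N : PetriNet P T) (U : Finset T) (msrc mtgt : P → ℝ)
    (hsrc : 0 ≤ msrc) (htgt : 0 ≤ mtgt) (Q : Set P) (hU1 : 1 ≤ U.card)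
    (hQtgt : ∀ p ∈ Q, mtgt p = 0) (hQsrc : ∃ p ∈ Q, 0 < msrc p)
    (htr : ∀ t' ∈ U, (∃ q ∈ Q, 0 < N.pre t' q) → (∃ q ∈ Q, 0 < N.post t' q)) :
    Sep N U msrc mtgt := by
  refine ⟨[[aP2 Q], [aZ1 Q]], ⟨?_, ?_, ?_⟩, ?_, ?_, ?_, ?_, ?_⟩
  · intro c hc ψ hψ
    rcases List.mem_cons.mp hc with rfl | hc
    · simp only [List.mem_singleton] at hψ; subst hψ; rfl
    · simp only [List.mem_singleton] at hc; subst hc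
      simp only [List.mem_singleton] at hψ; subst hψ; rfl
  · intro t ht c hc
    have htU : t ∈ U := ht
    refine ⟨c, hc, ?_⟩
    rcases List.mem_cons.mp hc with rfl | hc
    · intro ψ' hψ'
      simp only [List.mem_singleton] at hψ'; subst hψ'
      exact ⟨aP2 Q, List.mem_singleton_self _, atom_timplies_aP2 N t Q (htr t htU)⟩
    · simp only [List.mem_singleton] at hc; subst hc
      intro ψ' hψ'
      simp only [List.mem_singleton] at hψ'; subst hψ'
      exact ⟨aZ1 Q, List.mem_singleton_self _,
        atom_timplies_le N t (ind Q) (fun _ => 0) false (le_of_eq (dot_zero_left _))⟩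
  · intro t ht c hc
    have htU : t ∈ U := ht
    refine ⟨c, hc, ?_⟩
    rcases List.mem_cons.mp hc with rfl | hc
    · intro ψ' hψ'
      simp only [List.map_cons, List.map_nil, List.mem_singleton] at hψ'; subst hψ'
      refine ⟨(aP2 Q).transpose, by simp, ?_⟩
      exact atom_timplies_le N.transpose t (fun p => -ind Q p) (fun _ => 0) true
        (le_of_eq (dot_zero_left _))
    · simp only [List.mem_singleton] at hc; subst hc
      intro ψ' hψ'
      simp only [List.map_cons, List.map_nil, List.mem_singleton] at hψ'; subst hψ'
      refine ⟨(aZ1 Q).transpose, by simp, ?_⟩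
      exact atom_timplies_aZ2 N.transpose t Q (htr t htU)
  · refine ⟨[aP2 Q], List.mem_cons_self, ?_⟩
    intro ψ hψ
    simp only [List.mem_singleton] at hψ; subst hψ
    exact mem_sol_aP2.mpr ⟨hsrc, hsrc, dot_ind_pos Q hsrc hQsrc⟩
  · refine ⟨[aZ1 Q], List.mem_cons_of_mem _ (List.mem_singleton_self _), ?_⟩
    intro ψ hψ
    simp only [List.mem_singleton] at hψ; subst hψ
    exact mem_sol_aZ1.mpr ⟨htgt, htgt, dot_ind_le_zero Q hQtgt⟩
  · rintro ⟨c, hc, hall⟩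
    rcases List.mem_cons.mp hc with rfl | hc
    · have := hall (aP2 Q) (List.mem_singleton_self _)
      rw [mem_sol_aP2] at this
      obtain ⟨p, hp, hppos⟩ := dot_ind_pos_elim Q htgt this.2.2
      rw [hQtgt p hp] at hppos
      exact lt_irrefl 0 hppos
    · simp only [List.mem_singleton] at hc; subst hc
      have := hall (aZ1 Q) (List.mem_singleton_self _)
      rw [mem_sol_aZ1] at this
      obtain ⟨p, hp, hppos⟩ := hQsrc
      have := dot_ind_zero Q hsrc this.2.2 p hp
      linarith
  · simp only [List.length_cons, List.length_singleton, List.length_nil]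
    omega
  · intro c hc
    rcases List.mem_cons.mp hc with rfl | hc
    · simp only [List.length_singleton]; omega
    · simp only [List.mem_singleton] at hc; subst hc
      simp only [List.length_singleton]; omega

lemma sep_trap_rec (N : PetriNet P T) (U : Finset T) (msrc mtgt : P → ℝ)
    (hsrc : 0 ≤ msrc) (htgt : 0 ≤ mtgt) (Q : Set P) {t : T} (ht : t ∈ U)
    (hQsrc : ∀ p ∈ Q, msrc p = 0) (hQtgt : ∀ p ∈ Q, mtgt p = 0)
    (hpost_t : ∃ q ∈ Q, 0 < N.post t q)
    (htr : ∀ t' ∈ U, (∃ q ∈ Q, 0 < N.pre t' q) → (∃ q ∈ Q, 0 < N.post t' q))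
    (hrec : Sep N (U.erase t) msrc mtgt) : Sep N U msrc mtgt := by
  obtain ⟨φ', ⟨hb', hfwd', hbwd'⟩, hd1', hd2', hnot', hlen', hclen'⟩ := hrec
  refine ⟨[aP2 Q] :: φ'.map (fun c => aZ1 Q :: c), ⟨?_, ?_, ?_⟩, ?_, ?_, ?_, ?_, ?_⟩
  · intro c hc ψ hψ
    rcases List.mem_cons.mp hc with rfl | hc
    · simp only [List.mem_singleton] at hψ; subst hψ; rfl
    · obtain ⟨c0, hc0, rfl⟩ := List.mem_map.mp hc
      rcases List.mem_cons.mp hψ with rfl | hψ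
      · rfl
      · exact hb' c0 hc0 ψ hψ
  · -- forward
    intro t'' ht'' c hc
    have htU : t'' ∈ U := ht''
    rcases List.mem_cons.mp hc with rfl | hc
    · refine ⟨[aP2 Q], List.mem_cons_self, ?_⟩
      intro ψ' hψ'
      simp only [List.mem_singleton] at hψ'; subst hψ'
      exact ⟨aP2 Q, List.mem_singleton_self _, atom_timplies_aP2 N t'' Q (htr t'' htU)⟩
    · obtain ⟨c0, hc0, rfl⟩ := List.mem_map.mp hc
      by_cases htt : t'' = t
      · subst htt
        refine ⟨[aP2 Q], List.mem_cons_self, ?_⟩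
        intro ψ' hψ'
        simp only [List.mem_singleton] at hψ'; subst hψ'
        exact ⟨aZ1 Q, List.mem_cons_self,
          atom_timplies_to_aP2 N t'' Q hpost_t (aZ1 Q)⟩
      · obtain ⟨c1, hc1, himp⟩ := hfwd' t''
          (by simp only [Finset.coe_erase, Set.mem_diff, Set.mem_singleton_iff]
              exact ⟨htU, htt⟩) c0 hc0
        refine ⟨aZ1 Q :: c1, List.mem_cons_of_mem _ (List.mem_map_of_mem hc1), ?_⟩
        intro ψ' hψ'
        rcases List.mem_cons.mp hψ' with rfl | hψ'
        · exact ⟨aZ1 Q, List.mem_cons_self,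
            atom_timplies_le N t'' (ind Q) (fun _ => 0) false (le_of_eq (dot_zero_left _))⟩
        · obtain ⟨ψ, hψ, hti⟩ := himp ψ' hψ'
          exact ⟨ψ, List.mem_cons_of_mem _ hψ, hti⟩
  · -- backward
    intro t'' ht'' c hc
    have htU : t'' ∈ U := ht''
    rcases List.mem_cons.mp hc with rfl | hc
    · refine ⟨[aP2 Q], List.mem_cons_self, ?_⟩
      intro ψ' hψ'
      simp only [List.map_cons, List.map_nil, List.mem_singleton] at hψ'; subst hψ'
      refine ⟨(aP2 Q).transpose, by simp, ?_⟩
      exact atom_timplies_le N.transpose t'' (fun p => -ind Q p) (fun _ => 0) true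
        (le_of_eq (dot_zero_left _))
    · obtain ⟨c0, hc0, rfl⟩ := List.mem_map.mp hc
      by_cases htt : t'' = t
      · subst htt
        refine ⟨aZ1 Q :: c0, List.mem_cons_of_mem _ (List.mem_map_of_mem hc0), ?_⟩
        intro ψ' hψ'
        refine ⟨(aZ1 Q).transpose, ?_, ?_⟩
        · simp only [List.map_cons]
          exact List.mem_cons_self
        · exact atom_timplies_blocked N.transpose t'' Q hpost_t ψ'
      · obtain ⟨c1, hc1, himp⟩ := hbwd' t''
          (by simp only [Finset.coe_erase, Set.mem_diff, Set.mem_singleton_iff]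
              exact ⟨htU, htt⟩) c0 hc0
        refine ⟨aZ1 Q :: c1, List.mem_cons_of_mem _ (List.mem_map_of_mem hc1), ?_⟩
        intro ψ' hψ'
        simp only [List.map_cons] at hψ'
        rcases List.mem_cons.mp hψ' with rfl | hψ'
        · refine ⟨(aZ1 Q).transpose, by simp, ?_⟩
          exact atom_timplies_aZ2 N.transpose t'' Q (htr t'' htU)
        · obtain ⟨ψ, hψ, hti⟩ := himp ψ' hψ'
          refine ⟨ψ, ?_, hti⟩
          simp only [List.map_cons]
          exact List.mem_cons_of_mem _ hψ
  · obtain ⟨c0, hc0, hall⟩ := hd1'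
    refine ⟨aZ1 Q :: c0, List.mem_cons_of_mem _ (List.mem_map_of_mem hc0), ?_⟩
    intro ψ hψ
    rcases List.mem_cons.mp hψ with rfl | hψ
    · exact mem_sol_aZ1.mpr ⟨hsrc, hsrc, dot_ind_le_zero Q hQsrc⟩
    · exact hall ψ hψ
  · obtain ⟨c0, hc0, hall⟩ := hd2'
    refine ⟨aZ1 Q :: c0, List.mem_cons_of_mem _ (List.mem_map_of_mem hc0), ?_⟩
    intro ψ hψ
    rcases List.mem_cons.mp hψ with rfl | hψ
    · exact mem_sol_aZ1.mpr ⟨htgt, htgt, dot_ind_le_zero Q hQtgt⟩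
    · exact hall ψ hψ
  · rintro ⟨c, hc, hall⟩
    rcases List.mem_cons.mp hc with rfl | hc
    · have := hall (aP2 Q) (List.mem_singleton_self _)
      rw [mem_sol_aP2] at this
      obtain ⟨p, hp, hppos⟩ := dot_ind_pos_elim Q htgt this.2.2
      rw [hQtgt p hp] at hppos
      exact lt_irrefl 0 hppos
    · obtain ⟨c0, hc0, rfl⟩ := List.mem_map.mp hc
      refine hnot' ⟨c0, hc0, ?_⟩
      intro ψ hψ
      exact hall ψ (List.mem_cons_of_mem _ hψ)
  · have h1 : (U.erase t).card = U.card - 1 := Finset.card_erase_of_mem ht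
    have h2 : 1 ≤ U.card := Finset.card_pos.mpr ⟨t, ht⟩
    have h3 : φ'.length ≤ 2 * (U.card - 1) + 1 := by rw [← h1]; exact hlen'
    simp only [List.length_cons, List.length_map]
    omega
  · intro c hc
    have h1 : (U.erase t).card = U.card - 1 := Finset.card_erase_of_mem ht
    have h2 : 1 ≤ U.card := Finset.card_pos.mpr ⟨t, ht⟩
    rcases List.mem_cons.mp hc with rfl | hc
    · simp only [List.length_singleton]; omega
    · obtain ⟨c0, hc0, rfl⟩ := List.mem_map.mp hc
      have h3 : c0.length ≤ 2 * (U.card - 1) + 1 := by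
        have := hclen' c0 hc0
        rwa [h1] at this
      simp only [List.length_cons]
      omega

end Constructions

section Main

lemma sep_main : ∀ (k : ℕ) (N : PetriNet P T) (U : Finset T) (msrc mtgt : P → ℝ),
    U.card ≤ k → 0 ≤ msrc → 0 ≤ mtgt → ¬ Reach N ↑U msrc mtgt →
    Sep N U msrc mtgt := by
  intro k
  induction k with
  | zero =>
    intro N U msrc mtgt hcard hsrc htgt hreach
    have hU : U = ∅ := Finset.card_eq_zero.mp (Nat.le_zero.mp hcard)
    subst hU
    by_cases hx : ∃ x : T → ℝ, (∀ t, 0 ≤ x t) ∧ (∀ t, t ∉ (∅ : Finset T) → x t = 0) ∧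
        ∀ p, mtgt p - msrc p = ∑ t ∈ (∅ : Finset T), x t * PetriNet.delta N t p
    · exfalso
      obtain ⟨x, _, _, hxe⟩ := hx
      have : msrc = mtgt := by
        funext p
        have := hxe p
        simp only [Finset.sum_empty] at this
        linarith
      rw [this] at hreach
      exact hreach Relation.ReflTransGen.refl
    · obtain ⟨r, hrU, hrpos⟩ := farkas_app1 N ∅ (fun p => mtgt p - msrc p) hx
      apply sep_farkas N ∅ msrc mtgt hsrc htgt r hrU
      rw [dot_sub] at hrpos
      linarith
  | succ k ih =>
    intro N U msrc mtgt hcard hsrc htgt hreach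
    by_cases hx : ∃ x : T → ℝ, (∀ t, 0 ≤ x t) ∧ (∀ t, t ∉ U → x t = 0) ∧
        ∀ p, mtgt p - msrc p = ∑ t ∈ U, x t * PetriNet.delta N t p
    case neg =>
      obtain ⟨r, hrU, hrpos⟩ := farkas_app1 N U (fun p => mtgt p - msrc p) hx
      apply sep_farkas N U msrc mtgt hsrc htgt r hrU
      rw [dot_sub] at hrpos
      linarith
    case pos =>
      obtain ⟨x, hx0, hxs, hxe⟩ := hx
      by_cases hforced : ∃ t' ∈ U, ∀ z : T → ℝ, (∀ t, 0 ≤ z t) → (∀ t, t ∉ U → z t = 0) →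
          (∀ p, mtgt p - msrc p = ∑ t ∈ U, z t * PetriNet.delta N t p) → z t' = 0
      case pos =>
        obtain ⟨t', ht', hz⟩ := hforced
        obtain ⟨r, hrU, hrt', hr0⟩ :=
          farkas_app2 N U (fun p => mtgt p - msrc p) ht' ⟨x, hx0, hxs, hxe⟩ hz
        have hcard' : (U.erase t').card ≤ k := by
          have h1 := Finset.card_erase_of_mem ht'
          have h2 : 1 ≤ U.card := Finset.card_pos.mpr ⟨t', ht'⟩
          omega
        have hreach' : ¬ Reach N ↑(U.erase t') msrc mtgt := fun hh =>
          hreach (reach_mono (Finset.coe_subset.mpr (Finset.erase_subset _ _)) hh)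
        refine sep_face N U msrc mtgt hsrc htgt ht' r hrU hrt' ?_
          (ih N (U.erase t') msrc mtgt hcard' hsrc htgt hreach')
        rw [dot_sub] at hr0
        linarith
      case neg =>
        push_neg at hforced
        rcases U.eq_empty_or_nonempty with rfl | hUne
        · exfalso
          have : msrc = mtgt := by
            funext p
            have := hxe p
            simp only [Finset.sum_empty] at this
            linarith
          rw [this] at hreach
          exact hreach Relation.ReflTransGen.refl
        choose! zf hz1 hz2 hz3 hz4 using hforced
        set xf : T → ℝ := fun t => (x t + ∑ u ∈ U, zf u t) / (U.card + 1) with hxf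
        have hden : (0:ℝ) < (U.card : ℝ) + 1 := by positivity
        have hxf0 : ∀ t, 0 ≤ xf t := by
          intro t
          rw [hxf]
          dsimp only
          apply div_nonneg _ hden.le
          have := hx0 t
          have : 0 ≤ ∑ u ∈ U, zf u t :=
            Finset.sum_nonneg (fun u hu => hz1 u hu t)
          linarith [hx0 t]
        have hxfs : ∀ t, t ∉ U → xf t = 0 := by
          intro t ht
          rw [hxf]
          dsimp only
          rw [hxs t ht]
          have : ∑ u ∈ U, zf u t = 0 :=
            Finset.sum_eq_zero (fun u hu => hz2 u hu t ht)
          rw [this]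
          norm_num
        have hxfU : ∀ t ∈ U, 0 < xf t := by
          intro t ht
          rw [hxf]
          dsimp only
          apply div_pos _ hden
          have h1 : zf t t ≤ ∑ u ∈ U, zf u t :=
            Finset.single_le_sum (fun u hu => hz1 u hu t) ht
          have h2 : 0 < zf t t :=
            lt_of_le_of_ne (hz1 t ht t) (Ne.symm (hz4 t ht))
          have := hx0 t
          linarith
        have hxfe : ∀ p, mtgt p - msrc p = ∑ t ∈ U, xf t * PetriNet.delta N t p := by
          intro p
          have e1 : ∀ t ∈ U, xf t * PetriNet.delta N t p
              = (x t * PetriNet.delta N t p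
                + ∑ u ∈ U, zf u t * PetriNet.delta N t p) / ((U.card : ℝ) + 1) := by
            intro t _
            rw [hxf]
            dsimp only
            rw [div_mul_eq_mul_div, add_mul, Finset.sum_mul]
          rw [Finset.sum_congr rfl e1, ← Finset.sum_div, Finset.sum_add_distrib]
          have e3 : ∑ t ∈ U, ∑ u ∈ U, zf u t * PetriNet.delta N t p
              = ∑ u ∈ U, (mtgt p - msrc p) := by
            rw [Finset.sum_comm]
            apply Finset.sum_congr rfl
            intro u hu
            exact (hz3 u hu p).symm
          rw [e3, ← hxe p, Finset.sum_const, nsmul_eq_mul]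
          field_simp
          ring
        by_cases hfw : ∀ t ∈ U, Fireable N ↑U msrc t
        case neg =>
          push_neg at hfw
          obtain ⟨t, ht, hnf⟩ := hfw
          obtain ⟨Q, hQsrc, hpre_t, hsi⟩ :=
            exists_siphon N ↑U msrc hsrc (show t ∈ (↑U : Set T) from ht) hnf
          have hsi' : ∀ t' ∈ U, (∃ q ∈ Q, 0 < N.post t' q) → (∃ q ∈ Q, 0 < N.pre t' q) :=
            fun t' ht' => hsi t' ht'
          by_cases hQt : ∀ p ∈ Q, mtgt p = 0
          · have hcard' : (U.erase t).card ≤ k := by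
              have h1 := Finset.card_erase_of_mem ht
              have h2 : 1 ≤ U.card := Finset.card_pos.mpr ⟨t, ht⟩
              omega
            have hreach' : ¬ Reach N ↑(U.erase t) msrc mtgt := fun hh =>
              hreach (reach_mono (Finset.coe_subset.mpr (Finset.erase_subset _ _)) hh)
            exact sep_siphon_rec N U msrc mtgt hsrc htgt Q ht hQsrc hQt hpre_t hsi'
              (ih N (U.erase t) msrc mtgt hcard' hsrc htgt hreach')
          · push_neg at hQt
            obtain ⟨p, hp, hpne⟩ := hQt
            exact sep_siphon2 N U msrc mtgt hsrc htgt Q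
              (Finset.card_pos.mpr ⟨t, ht⟩) hQsrc
              ⟨p, hp, lt_of_le_of_ne (htgt p) (Ne.symm hpne)⟩ hsi'
        case pos =>
          by_cases hbw : ∀ t ∈ U, Fireable N.transpose ↑U mtgt t
          case neg =>
            push_neg at hbw
            obtain ⟨t, ht, hnf⟩ := hbw
            obtain ⟨Q, hQtgt, hpost_t, htrT⟩ :=
              exists_siphon N.transpose ↑U mtgt htgt (show t ∈ (↑U : Set T) from ht) hnf
            have hpost_t' : ∃ q ∈ Q, 0 < N.post t q := hpost_t
            have htr : ∀ t' ∈ U, (∃ q ∈ Q, 0 < N.pre t' q) → (∃ q ∈ Q, 0 < N.post t' q) :=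
              fun t' ht' hh => htrT t' ht' hh
            by_cases hQs : ∀ p ∈ Q, msrc p = 0
            · have hcard' : (U.erase t).card ≤ k := by
                have h1 := Finset.card_erase_of_mem ht
                have h2 : 1 ≤ U.card := Finset.card_pos.mpr ⟨t, ht⟩
                omega
              have hreach' : ¬ Reach N ↑(U.erase t) msrc mtgt := fun hh =>
                hreach (reach_mono (Finset.coe_subset.mpr (Finset.erase_subset _ _)) hh)
              exact sep_trap_rec N U msrc mtgt hsrc htgt Q ht hQs hQtgt hpost_t' htr
                (ih N (U.erase t) msrc mtgt hcard' hsrc htgt hreach')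
            · push_neg at hQs
              obtain ⟨p, hp, hpne⟩ := hQs
              exact sep_trap2 N U msrc mtgt hsrc htgt Q
                (Finset.card_pos.mpr ⟨t, ht⟩) hQtgt
                ⟨p, hp, lt_of_le_of_ne (hsrc p) (Ne.symm hpne)⟩ htr
          case pos =>
            exfalso
            apply hreach
            apply reachable_of_full N U hUne msrc mtgt hsrc htgt xf hxf0 hxfU hxfs
              ?_ hfw hbw
            intro p
            have := hxfe p
            linarith

end Main

end
end BiSep

/-- If `mtgt` is not reachable from `msrc` in `N_U`, then there is a locally closed
bi-separator for `(msrc, mtgt)` w.r.t. `N_U` with at most `2|U| + 1` clauses, each with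
at most `2|U| + 1` atomic propositions. -/
theorem exists_locallyClosed_biseparator
    {P T : Type*} [Fintype P]
    (N : PetriNet P T) (U : Finset T) (msrc mtgt : P → ℝ)
    (hsrc : 0 ≤ msrc) (htgt : 0 ≤ mtgt)
    (h : ¬ Relation.ReflTransGen (N.stepOn ↑U) msrc mtgt) :
    ∃ φ : List (List (Atom P)),
      LocallyClosedOn N ↑U φ ∧
      (msrc, msrc) ∈ Formula.sol φ ∧
      (mtgt, mtgt) ∈ Formula.sol φ ∧
      (msrc, mtgt) ∉ Formula.sol φ ∧
      φ.length ≤ 2 * U.card + 1 ∧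
      ∀ c ∈ φ, c.length ≤ 2 * U.card + 1 := by
  exact BiSep.sep_main U.card N U msrc mtgt le_rfl hsrc htgt h
end

section
/- Let a, a', l ∈ ℝ^n and b' ∈ ℝ. Let X := {x ∈ ℝ^n : a·x ≤ 0 ∧ x ≥ l} and Y := {x ∈ ℝ^n : a'·x ≤ b'}, and suppose X ≠ ∅. Then X ⊆ Y if and only if there exists λ ≥ 0 such that λa ≥ a' (componentwise) and −b' ≤ (λa − a')·l. -/
/-!
Writing `x = l + y`, the claim becomes duality for a single constraint over the nonnegative
orthant: `a ⬝ᵥ y ≤ c` and `0 ≤ y` imply `a' ⬝ᵥ y ≤ d` (with `c = -(a ⬝ᵥ l)`, `d = b' - a' ⬝ᵥ l`)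
iff `a' ≤ λ • a` and `λ * c ≤ d` for some `λ ≥ 0`. Homogenizing with an extra coordinate `t`
(for `t = 0`, `y` is a recession direction of the nonempty feasible set) reduces this to Farkas'
lemma for one inequality: if `β ⬝ᵥ z ≤ 0` on the cone `0 ≤ z`, `α ⬝ᵥ z ≤ 0`, then `β ≤ λ • α`
for some `λ ≥ 0`. The conditions on `λ` are the lower bounds `β j / α j` for `α j > 0` and the
upper bounds `β i / α i` for `α i < 0`, and testing the cone vector `α j • e i - α i • e j` shows
that each lower bound lies below each upper bound.
-/

open Matrix

lemma option_elim_dotProduct {ι R : Type*} [Fintype ι] [Mul R] [AddCommMonoid R]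
    (x : R) (v : ι → R) (w : Option ι → R) :
    (fun o => o.elim x v) ⬝ᵥ w = x * w none + v ⬝ᵥ (w ∘ some) :=
  Fintype.sum_option _

section LinearOrderedField

variable {𝕜 : Type*} [Field 𝕜] [LinearOrder 𝕜] [IsStrictOrderedRing 𝕜]

lemma nonpos_of_forall_nonneg_add_mul_le {p q b : 𝕜} (h : ∀ t, 0 ≤ t → p + t * q ≤ b) :
    q ≤ 0 := by
  by_contra! hq
  have := h ((b - p + 1) / q) (div_nonneg (by linarith [h 0 le_rfl]) hq.le)
  rw [div_mul_cancel₀ _ hq.ne'] at this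
  linarith

variable {κ : Type*} [Fintype κ] {α β : κ → 𝕜}

lemma nonpos_of_forall_dotProduct_nonpos (h : ∀ z, 0 ≤ z → α ⬝ᵥ z ≤ 0 → β ⬝ᵥ z ≤ 0) {i : κ}
    (hi : α i ≤ 0) : β i ≤ 0 := by
  classical
  have := h (Pi.single i 1) (Pi.single_nonneg.2 zero_le_one) (by rwa [dotProduct_single, mul_one])
  rwa [dotProduct_single, mul_one] at this

lemma div_le_div_of_forall_dotProduct_nonpos (h : ∀ z, 0 ≤ z → α ⬝ᵥ z ≤ 0 → β ⬝ᵥ z ≤ 0)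
    {i j : κ} (hj : 0 < α j) (hi : α i < 0) : β j / α j ≤ β i / α i := by
  classical
  have := h (Pi.single i (α j) + Pi.single j (-α i))
    (add_nonneg (Pi.single_nonneg.2 hj.le) (Pi.single_nonneg.2 (neg_nonneg.2 hi.le)))
    (by rw [dotProduct_add, dotProduct_single, dotProduct_single]; linarith)
  rw [dotProduct_add, dotProduct_single, dotProduct_single] at this
  rw [div_le_iff₀ hj, div_mul_eq_mul_div, le_div_iff_of_neg hi]
  linarith

theorem exists_nonneg_le_smul_of_forall_dotProduct_nonpos
    (h : ∀ z, 0 ≤ z → α ⬝ᵥ z ≤ 0 → β ⬝ᵥ z ≤ 0) : ∃ lam : 𝕜, 0 ≤ lam ∧ β ≤ lam • α := by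
  -- the least `lam ≥ 0` meeting the lower bounds `β j / α j` coming from the `α j > 0`
  set lam := Finset.univ.fold max 0 fun j => if 0 < α j then β j / α j else 0
  refine ⟨lam, (Finset.le_fold_max _).2 (Or.inl le_rfl), fun i => ?_⟩
  rw [Pi.smul_apply, smul_eq_mul]
  rcases lt_trichotomy (α i) 0 with hi | hi | hi
  · have hnonneg : 0 ≤ β i / α i :=
      div_nonneg_of_nonpos (nonpos_of_forall_dotProduct_nonpos h hi.le) hi.le
    have : lam ≤ β i / α i := by
      refine (Finset.fold_max_le _).2 ⟨hnonneg, fun j _ => ?_⟩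
      split_ifs with hj
      exacts [div_le_div_of_forall_dotProduct_nonpos h hj hi, hnonneg]
    exact (le_div_iff_of_neg hi).1 this
  · rw [hi, mul_zero]
    exact nonpos_of_forall_dotProduct_nonpos h hi.le
  · have : β i / α i ≤ lam :=
      (Finset.le_fold_max _).2 (Or.inr ⟨i, Finset.mem_univ i, (if_pos hi).ge⟩)
    exact (div_le_iff₀ hi).1 this

variable {ι : Type*} [Fintype ι] {a a' : ι → 𝕜} {c d : 𝕜}

lemma dotProduct_nonpos_of_recession (hfeas : ∃ y₀, 0 ≤ y₀ ∧ a ⬝ᵥ y₀ ≤ c)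
    (h : ∀ y, 0 ≤ y → a ⬝ᵥ y ≤ c → a' ⬝ᵥ y ≤ d) {v : ι → 𝕜} (hv : 0 ≤ v) (hav : a ⬝ᵥ v ≤ 0) :
    a' ⬝ᵥ v ≤ 0 := by
  obtain ⟨y₀, hy₀, hay₀⟩ := hfeas
  refine nonpos_of_forall_nonneg_add_mul_le (p := a' ⬝ᵥ y₀) (b := d) fun t ht => ?_
  have := h (y₀ + t • v) (add_nonneg hy₀ (smul_nonneg ht hv)) (by
    rw [dotProduct_add, dotProduct_smul, smul_eq_mul]
    linarith [mul_nonpos_of_nonneg_of_nonpos ht hav])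
  rwa [dotProduct_add, dotProduct_smul, smul_eq_mul] at this

lemma dotProduct_le_mul_of_forall_dotProduct_le (hfeas : ∃ y₀, 0 ≤ y₀ ∧ a ⬝ᵥ y₀ ≤ c)
    (h : ∀ y, 0 ≤ y → a ⬝ᵥ y ≤ c → a' ⬝ᵥ y ≤ d) {y : ι → 𝕜} {t : 𝕜} (hy : 0 ≤ y) (ht : 0 ≤ t)
    (hyt : a ⬝ᵥ y ≤ c * t) : a' ⬝ᵥ y ≤ d * t := by
  rcases ht.eq_or_lt with rfl | ht
  · rw [mul_zero] at hyt ⊢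
    exact dotProduct_nonpos_of_recession hfeas h hy hyt
  · have := h (t⁻¹ • y) (smul_nonneg (inv_nonneg.2 ht.le) hy) (by
      rwa [dotProduct_smul, smul_eq_mul, inv_mul_le_iff₀ ht, mul_comm])
    rwa [dotProduct_smul, smul_eq_mul, inv_mul_le_iff₀ ht, mul_comm] at this

theorem forall_nonneg_dotProduct_le_iff (hfeas : ∃ y₀, 0 ≤ y₀ ∧ a ⬝ᵥ y₀ ≤ c) :
    (∀ y, 0 ≤ y → a ⬝ᵥ y ≤ c → a' ⬝ᵥ y ≤ d) ↔
      ∃ lam, 0 ≤ lam ∧ a' ≤ lam • a ∧ lam * c ≤ d := by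
  constructor
  · intro h
    -- homogenize: the extra coordinate `none` carries the right-hand sides
    obtain ⟨lam, hlam, hle⟩ := exists_nonneg_le_smul_of_forall_dotProduct_nonpos
      (α := fun o : Option ι => o.elim (-c) a) (β := fun o : Option ι => o.elim (-d) a')
      fun z hz hαz => by
        rw [option_elim_dotProduct] at hαz ⊢
        have := dotProduct_le_mul_of_forall_dotProduct_le hfeas h (fun i => hz (some i))
          (hz none) (y := z ∘ some) (by linarith)
        linarith
    refine ⟨lam, hlam, fun i => hle (some i), ?_⟩
    have : -d ≤ lam * -c := hle none
    linarith
  · rintro ⟨lam, hlam, hle, hlc⟩ y hy hay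
    calc a' ⬝ᵥ y ≤ (lam • a) ⬝ᵥ y := dotProduct_le_dotProduct_of_nonneg_right hle hy
      _ = lam * (a ⬝ᵥ y) := by rw [smul_dotProduct, smul_eq_mul]
      _ ≤ lam * c := mul_le_mul_of_nonneg_left hay hlam
      _ ≤ d := hlc

end LinearOrderedField

/-- For nonempty `X = {x : a·x ≤ 0 ∧ x ≥ l}` and `Y = {x : a'·x ≤ b'}`:
`X ⊆ Y` iff there is `λ ≥ 0` with `λa ≥ a'` and `-b' ≤ (λa - a')·l`. -/
theorem subset_iff_exists_lambda
    {n : ℕ} (a a' l : Fin n → ℝ) (b' : ℝ)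
    (hX : ∃ x : Fin n → ℝ, a ⬝ᵥ x ≤ 0 ∧ l ≤ x) :
    {x : Fin n → ℝ | a ⬝ᵥ x ≤ 0 ∧ l ≤ x} ⊆ {x : Fin n → ℝ | a' ⬝ᵥ x ≤ b'} ↔
      ∃ lam : ℝ, 0 ≤ lam ∧ a' ≤ lam • a ∧ -b' ≤ (lam • a - a') ⬝ᵥ l := by
  obtain ⟨x₀, hx₀a, hx₀l⟩ := hX
  have hsubst : {x : Fin n → ℝ | a ⬝ᵥ x ≤ 0 ∧ l ≤ x} ⊆ {x | a' ⬝ᵥ x ≤ b'} ↔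
      ∀ y, 0 ≤ y → a ⬝ᵥ y ≤ -(a ⬝ᵥ l) → a' ⬝ᵥ y ≤ b' - a' ⬝ᵥ l := by
    constructor
    · intro hsub y hy hay
      have := @hsub (l + y) ⟨by rw [dotProduct_add]; linarith, le_add_of_nonneg_right hy⟩
      rw [Set.mem_ofPred_eq, dotProduct_add] at this
      linarith
    · rintro h x ⟨hax, hlx⟩
      have := h (x - l) (sub_nonneg.2 hlx) (by rw [dotProduct_sub]; linarith)
      rw [dotProduct_sub] at this
      show a' ⬝ᵥ x ≤ b'
      linarith
  rw [hsubst, forall_nonneg_dotProduct_le_iff ⟨x₀ - l, sub_nonneg.2 hx₀l, by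
    rw [dotProduct_sub]; linarith⟩]
  refine exists_congr fun lam => and_congr_right' (and_congr_right' ?_)
  rw [sub_dotProduct, smul_dotProduct, smul_eq_mul]
  constructor <;> intro <;> linarith
end

section
/- Let a, a' ∈ ℝ^n, b' ∈ ℝ, l ∈ ℝ^n with l ≥ 0, and ∼, ∼' ∈ {≤, <}. Let X_∼ := {x ∈ ℝ^n : x ≥ l ∧ a·x ∼ 0} and Y_∼' := {x ∈ ℝ^n : a'·x ∼' b'}, and suppose X_∼ ≠ ∅. Then X_∼ ⊆ Y_∼' if and only if there exists λ ≥ 0 such that λa ≥ a' (componentwise) and one of the following holds: (1) ∼' is ≤ and −b' ≤ (λa − a')·l; (2) ∼ is ≤, ∼' is <, and −b' < (λa − a')·l; (3) ∼ is <, ∼' is <, and either −b' < (λa − a')·l, or both −b' = (λa − a')·l and λ > 0. -/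
open Matrix

/-- `rel strict x y` is `x < y` if `strict`, and `x ≤ y` otherwise. -/
def rel (strict : Bool) (x y : ℝ) : Prop := if strict then x < y else x ≤ y

/-!
Write `c = a·l`, and for a multiplier `λ ≥ 0` with `λa ≥ a'` put `δ = (λa - a')·l`. The three
cases of the conclusion say precisely that `λu - δ ∼' b'` for all `u ∼ 0`. Since `λa - a' ≥ 0`,
every `x ∈ X` satisfies `a'·x ≤ λ(a·x) - δ`, which gives `X ⊆ Y`.

Conversely, along a ray `l + t e_k` with `a'_k = λa_k` that inequality is an equality, while
`a·(l + t e_k) = c + t a_k` sweeps out everything between `c` and `±∞`. Because `X` is nonempty,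
`X ⊆ Y` forces `a'·d ≤ 0` on the recession cone `{d ≥ 0 : a·d ≤ 0}`, so the multipliers form a
nonempty interval whose endpoints are `0` or ratios `a'_k / a_k`. If `l ∈ X`, the least
multiplier is `0` or attained at some `a_k > 0`, and its ray reaches every `u ∈ [c, 0]`.
Otherwise `X ≠ ∅` forces some `a_j < 0`, and the greatest multiplier is attained at some
`a_k < 0`, whose ray reaches every `u ∼ 0`, all of which lie below `c`.
-/

@[simp] lemma rel_false {x y : ℝ} : rel false x y ↔ x ≤ y := Iff.rfl

@[simp] lemma rel_true {x y : ℝ} : rel true x y ↔ x < y := Iff.rfl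

lemma rel.le {s : Bool} {x y : ℝ} (h : rel s x y) : x ≤ y := by
  cases s
  exacts [h, le_of_lt h]

lemma rel_of_le_of_rel {s : Bool} {x y z : ℝ} (hzx : z ≤ x) (h : rel s x y) : rel s z y := by
  cases s
  exacts [hzx.trans h, hzx.trans_lt h]

lemma lt_of_rel_of_not_rel {s : Bool} {x y z : ℝ} (hx : rel s x z) (hy : ¬ rel s y z) :
    x < y := by
  cases s <;> simp only [rel_false, rel_true, not_le, not_lt] at hx hy <;> linarith

lemma nonpos_of_forall_add_mul_le {u v b : ℝ} (h : ∀ t, 0 ≤ t → u + t * v ≤ b) : v ≤ 0 := by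
  by_contra! hv
  have := h (max 0 ((b - u + 1) / v)) (le_max_left _ _)
  have : (b - u + 1) / v * v ≤ max 0 ((b - u + 1) / v) * v :=
    mul_le_mul_of_nonneg_right (le_max_right _ _) hv.le
  rw [div_mul_cancel₀ _ hv.ne'] at this
  linarith

open Filter Topology in
lemma neg_le_of_forall_neg_mul_sub_le {lam δ b : ℝ} (h : ∀ u < 0, lam * u - δ ≤ b) : -δ ≤ b := by
  have hlim : Tendsto (fun u => lam * u - δ) (𝓝[<] 0) (𝓝 (-δ)) := by
    have : Continuous (fun u : ℝ => lam * u - δ) := by fun_prop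
    simpa using (this.tendsto 0).mono_left nhdsWithin_le_nhds
  exact le_of_tendsto hlim (eventually_nhdsWithin_of_forall h)

lemma exists_neg_of_dotProduct_neg {ι : Type*} [Fintype ι] {a d : ι → ℝ} (hd : 0 ≤ d)
    (had : a ⬝ᵥ d < 0) : ∃ j, a j < 0 := by
  by_contra! ha
  exact (dotProduct_nonneg_of_nonneg ha hd).not_gt had

section Multiplier

variable {ι : Type*} [Fintype ι] [DecidableEq ι] {a a' : ι → ℝ}

lemma nonpos_of_forall_dotProduct_nonpos_s14 (hrec : ∀ d, 0 ≤ d → a ⬝ᵥ d ≤ 0 → a' ⬝ᵥ d ≤ 0)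
    {i : ι} (hi : a i ≤ 0) : a' i ≤ 0 := by
  simpa [dotProduct_single] using hrec (Pi.single i 1) (Pi.single_nonneg.2 zero_le_one)
    (by simpa [dotProduct_single] using hi)

lemma mul_le_mul_of_forall_dotProduct_nonpos (hrec : ∀ d, 0 ≤ d → a ⬝ᵥ d ≤ 0 → a' ⬝ᵥ d ≤ 0)
    {i k : ι} (hk : 0 ≤ a k) (hi : a i ≤ 0) :
    a k * a' i ≤ a i * a' k := by
  have hd : (0 : ι → ℝ) ≤ Pi.single i (a k) + Pi.single k (-a i) :=
    add_nonneg (Pi.single_nonneg.2 hk) (Pi.single_nonneg.2 (neg_nonneg.2 hi))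
  have := hrec _ hd (by simp only [dotProduct_add, dotProduct_single]; linarith)
  simp only [dotProduct_add, dotProduct_single] at this
  linarith

lemma exists_min_multiplier (hrec : ∀ d, 0 ≤ d → a ⬝ᵥ d ≤ 0 → a' ⬝ᵥ d ≤ 0) :
    ∃ lam, 0 ≤ lam ∧ a' ≤ lam • a ∧ (lam = 0 ∨ ∃ k, 0 < a k ∧ a' k = lam * a k) := by
  by_cases hpos : ∃ k, 0 < a k ∧ 0 < a' k
  · obtain ⟨k₀, hk₀, hk₀'⟩ := hpos
    obtain ⟨k, hk, hmax⟩ := (Finset.univ.filter fun i => 0 < a i).exists_max_image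
      (fun i => a' i / a i) ⟨k₀, by simpa using hk₀⟩
    simp only [Finset.mem_filter, Finset.mem_univ, true_and] at hk hmax
    have hlam : 0 < a' k / a k := (div_pos hk₀' hk₀).trans_le (hmax k₀ hk₀)
    refine ⟨a' k / a k, hlam.le, fun i => ?_, .inr ⟨k, hk, (div_mul_cancel₀ _ hk.ne').symm⟩⟩
    simp only [Pi.smul_apply, smul_eq_mul]
    rcases lt_or_ge 0 (a i) with hi | hi
    · exact (div_le_iff₀ hi).1 (hmax i hi)
    · have := mul_le_mul_of_forall_dotProduct_nonpos hrec hk.le hi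
      rw [div_mul_eq_mul_div, le_div_iff₀ hk]
      linarith
  · push Not at hpos
    refine ⟨0, le_rfl, fun i => ?_, .inl rfl⟩
    simp only [zero_smul, Pi.zero_apply]
    rcases lt_or_ge 0 (a i) with hi | hi
    exacts [hpos i hi, nonpos_of_forall_dotProduct_nonpos_s14 hrec hi]

lemma exists_max_multiplier (hrec : ∀ d, 0 ≤ d → a ⬝ᵥ d ≤ 0 → a' ⬝ᵥ d ≤ 0)
    {j : ι} (hj : a j < 0) :
    ∃ lam, 0 ≤ lam ∧ a' ≤ lam • a ∧ ∃ k, a k < 0 ∧ a' k = lam * a k := by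
  obtain ⟨k, hk, hmin⟩ := (Finset.univ.filter fun i => a i < 0).exists_min_image
    (fun i => a' i / a i) ⟨j, by simpa using hj⟩
  simp only [Finset.mem_filter, Finset.mem_univ, true_and] at hk hmin
  refine ⟨a' k / a k, div_nonneg_of_nonpos (nonpos_of_forall_dotProduct_nonpos_s14 hrec hk.le) hk.le,
    fun i => ?_, k, hk, (div_mul_cancel₀ _ hk.ne).symm⟩
  simp only [Pi.smul_apply, smul_eq_mul]
  rcases lt_or_ge (a i) 0 with hi | hi
  · exact (le_div_iff_of_neg hi).1 (hmin i hi)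
  · have := mul_le_mul_of_forall_dotProduct_nonpos hrec hi hk.le
    rw [div_mul_eq_mul_div, le_div_iff_of_neg hk]
    linarith

end Multiplier

section Subset

variable {ι : Type*} [Fintype ι] {a a' l : ι → ℝ} {b' : ℝ} {s s' : Bool}

lemma dotProduct_nonpos_of_subset (hsub : ∀ x, l ≤ x → rel s (a ⬝ᵥ x) 0 → rel s' (a' ⬝ᵥ x) b')
    {x₀ : ι → ℝ} (hx₀ : l ≤ x₀) (hax₀ : rel s (a ⬝ᵥ x₀) 0) {d : ι → ℝ} (hd : 0 ≤ d)
    (had : a ⬝ᵥ d ≤ 0) : a' ⬝ᵥ d ≤ 0 := by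
  refine nonpos_of_forall_add_mul_le (u := a' ⬝ᵥ x₀) (b := b') fun t ht => ?_
  have hx : l ≤ x₀ + t • d := le_add_of_le_of_nonneg hx₀ (smul_nonneg ht hd)
  have hax : a ⬝ᵥ (x₀ + t • d) ≤ a ⬝ᵥ x₀ := by
    rw [dotProduct_add, dotProduct_smul, smul_eq_mul]
    linarith [mul_nonpos_of_nonneg_of_nonpos ht had]
  simpa [dotProduct_add, dotProduct_smul] using (hsub _ hx (rel_of_le_of_rel hax hax₀)).le

lemma rel_of_subset_of_dotProduct_eq
    (hsub : ∀ x, l ≤ x → rel s (a ⬝ᵥ x) 0 → rel s' (a' ⬝ᵥ x) b')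
    {lam : ℝ} {x : ι → ℝ} (hx : l ≤ x) (hax : rel s (a ⬝ᵥ x) 0)
    (htight : (lam • a - a') ⬝ᵥ x = (lam • a - a') ⬝ᵥ l) :
    rel s' (lam * (a ⬝ᵥ x) - (lam • a - a') ⬝ᵥ l) b' := by
  rw [← htight, sub_dotProduct, smul_dotProduct, smul_eq_mul, sub_sub_cancel]
  exact hsub x hx hax

lemma rel_of_subset_of_ray [DecidableEq ι]
    (hsub : ∀ x, l ≤ x → rel s (a ⬝ᵥ x) 0 → rel s' (a' ⬝ᵥ x) b')
    {lam u : ℝ} {k : ι} (hk : a' k = lam * a k) (hak : a k ≠ 0) (hu : rel s u 0)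
    (ht : 0 ≤ (u - a ⬝ᵥ l) / a k) :
    rel s' (lam * u - (lam • a - a') ⬝ᵥ l) b' := by
  set x := l + Pi.single k ((u - a ⬝ᵥ l) / a k)
  have hax : a ⬝ᵥ x = u := by
    simp only [x, dotProduct_add, dotProduct_single]
    field_simp
    ring
  have htight : (lam • a - a') ⬝ᵥ x = (lam • a - a') ⬝ᵥ l := by
    simp [x, dotProduct_add, dotProduct_single, hk]
  have := rel_of_subset_of_dotProduct_eq hsub (le_add_of_nonneg_right (Pi.single_nonneg.2 ht))
    (by rwa [hax]) htight
  rwa [hax] at this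

lemma exists_multiplier_of_subset [DecidableEq ι]
    (hsub : ∀ x, l ≤ x → rel s (a ⬝ᵥ x) 0 → rel s' (a' ⬝ᵥ x) b')
    (hX : ∃ x, l ≤ x ∧ rel s (a ⬝ᵥ x) 0) :
    ∃ lam, 0 ≤ lam ∧ a' ≤ lam • a ∧
      ∀ u, rel s u 0 → rel s' (lam * u - (lam • a - a') ⬝ᵥ l) b' := by
  obtain ⟨x₀, hx₀, hax₀⟩ := hX
  have hrec := fun d => dotProduct_nonpos_of_subset (d := d) hsub hx₀ hax₀
  by_cases hl : rel s (a ⬝ᵥ l) 0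
  · have hlam_l := fun lam => rel_of_subset_of_dotProduct_eq (lam := lam) hsub le_rfl hl rfl
    obtain ⟨lam, hlam, hle, rfl | ⟨k, hk, hk'⟩⟩ := exists_min_multiplier hrec
    · exact ⟨0, le_rfl, hle, fun u _ => by simpa using hlam_l 0⟩
    refine ⟨lam, hlam, hle, fun u hu => ?_⟩
    rcases le_or_gt u (a ⬝ᵥ l) with hul | hul
    · exact rel_of_le_of_rel (by gcongr) (hlam_l lam)
    · exact rel_of_subset_of_ray hsub hk' hk.ne' hu (div_nonneg (sub_nonneg.2 hul.le) hk.le)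
  · obtain ⟨j, hj⟩ : ∃ j, a j < 0 := exists_neg_of_dotProduct_neg (sub_nonneg.2 hx₀)
      (by rw [dotProduct_sub, sub_neg]; exact lt_of_rel_of_not_rel hax₀ hl)
    obtain ⟨lam, hlam, hle, k, hk, hk'⟩ := exists_max_multiplier hrec hj
    exact ⟨lam, hlam, hle, fun u hu => rel_of_subset_of_ray hsub hk' hk.ne hu
      (div_nonneg_of_nonpos (sub_nonpos.2 (lt_of_rel_of_not_rel hu hl).le) hk.le)⟩

lemma rel_of_forall_rel_mul_sub {lam : ℝ} {x : ι → ℝ} (hle : a' ≤ lam • a)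
    (h : ∀ u, rel s u 0 → rel s' (lam * u - (lam • a - a') ⬝ᵥ l) b')
    (hx : l ≤ x) (hax : rel s (a ⬝ᵥ x) 0) : rel s' (a' ⬝ᵥ x) b' := by
  refine rel_of_le_of_rel ?_ (h _ hax)
  have := dotProduct_le_dotProduct_of_nonneg_left hx (sub_nonneg.2 hle)
  simp only [sub_dotProduct, smul_dotProduct, smul_eq_mul] at this ⊢
  linarith

end Subset

lemma forall_rel_mul_sub_iff {s s' : Bool} {lam δ b : ℝ} (hlam : 0 ≤ lam) :
    (∀ u, rel s u 0 → rel s' (lam * u - δ) b) ↔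
      ((s' = false ∧ -b ≤ δ) ∨ (s = false ∧ s' = true ∧ -b < δ) ∨
        (s = true ∧ s' = true ∧ (-b < δ ∨ (-b = δ ∧ 0 < lam)))) := by
  cases s <;> cases s' <;> simp only [rel_false, rel_true, Bool.false_eq_true, Bool.true_eq_false,
    true_and, false_and, or_false, false_or]
  · exact ⟨fun h => by linarith [h 0 le_rfl],
      fun h u hu => by linarith [mul_nonpos_of_nonneg_of_nonpos hlam hu]⟩
  · exact ⟨fun h => by linarith [h 0 le_rfl],
      fun h u hu => by linarith [mul_nonpos_of_nonneg_of_nonpos hlam hu]⟩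
  · refine ⟨fun h => by linarith [neg_le_of_forall_neg_mul_sub_le h], fun h u hu => ?_⟩
    linarith [mul_nonpos_of_nonneg_of_nonpos hlam hu.le]
  · refine ⟨fun h => ?_, ?_⟩
    · rcases (neg_le_of_forall_neg_mul_sub_le fun u hu => (h u hu).le).lt_or_eq with hlt | heq
      · exact .inl (by linarith)
      refine .inr ⟨by linarith, hlam.lt_of_ne fun h0 => ?_⟩
      have := h (-1) (by norm_num)
      rw [← h0] at this
      linarith
    · rintro (h | ⟨h, hpos⟩) u hu
      · linarith [mul_nonpos_of_nonneg_of_nonpos hlam hu.le]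
      · linarith [mul_neg_of_pos_of_neg hpos hu]

theorem subset_iff_exists_lambda_cases_general
    {n : ℕ} (a a' : Fin n → ℝ) (b' : ℝ) (l : Fin n → ℝ)
    (s s' : Bool)
    (hX : ∃ x : Fin n → ℝ, l ≤ x ∧ rel s (a ⬝ᵥ x) 0) :
    {x : Fin n → ℝ | l ≤ x ∧ rel s (a ⬝ᵥ x) 0} ⊆
        {x : Fin n → ℝ | rel s' (a' ⬝ᵥ x) b'} ↔
      ∃ lam : ℝ, 0 ≤ lam ∧ a' ≤ lam • a ∧
        ((s' = false ∧ -b' ≤ (lam • a - a') ⬝ᵥ l) ∨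
          (s = false ∧ s' = true ∧ -b' < (lam • a - a') ⬝ᵥ l) ∨
          (s = true ∧ s' = true ∧
            (-b' < (lam • a - a') ⬝ᵥ l ∨
              (-b' = (lam • a - a') ⬝ᵥ l ∧ 0 < lam)))) := by
  constructor
  · intro hsub
    obtain ⟨lam, hlam, hle, h⟩ := exists_multiplier_of_subset (fun x hx hax => hsub ⟨hx, hax⟩) hX
    exact ⟨lam, hlam, hle, (forall_rel_mul_sub_iff hlam).1 h⟩
  · rintro ⟨lam, hlam, hle, hcases⟩ x ⟨hx, hax⟩
    exact rel_of_forall_rel_mul_sub hle ((forall_rel_mul_sub_iff hlam).2 hcases) hx hax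

/-- For `∼, ∼' ∈ {≤, <}` (encoded as Booleans, `true` meaning `<`), `l ≥ 0` and
nonempty `X_∼ = {x : x ≥ l ∧ a·x ∼ 0}`, one has `X_∼ ⊆ Y_∼'` iff there is `λ ≥ 0`
with `λa ≥ a'` and one of three side conditions depending on `∼` and `∼'`. -/
theorem subset_iff_exists_lambda_cases
    {n : ℕ} (a a' : Fin n → ℝ) (b' : ℝ) (l : Fin n → ℝ) (hl : 0 ≤ l)
    (s s' : Bool)
    (hX : ∃ x : Fin n → ℝ, l ≤ x ∧ rel s (a ⬝ᵥ x) 0) :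
    {x : Fin n → ℝ | l ≤ x ∧ rel s (a ⬝ᵥ x) 0} ⊆
        {x : Fin n → ℝ | rel s' (a' ⬝ᵥ x) b'} ↔
      ∃ lam : ℝ, 0 ≤ lam ∧ a' ≤ lam • a ∧
        ((s' = false ∧ -b' ≤ (lam • a - a') ⬝ᵥ l) ∨
          (s = false ∧ s' = true ∧ -b' < (lam • a - a') ⬝ᵥ l) ∨
          (s = true ∧ s' = true ∧
            (-b' < (lam • a - a') ⬝ᵥ l ∨
              (-b' = (lam • a - a') ⬝ᵥ l ∧ 0 < lam)))) :=
  subset_iff_exists_lambda_cases_general a a' b' l s s' hX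
end

section
/- Let a, a' ∈ ℝ^n, b' ∈ ℝ, and l ∈ ℝ^n with l ≥ 0. Let X_< := {x ∈ ℝ^n : x ≥ l ∧ a·x < 0}, X_≤ := {x ∈ ℝ^n : x ≥ l ∧ a·x ≤ 0}, and Y_≤ := {x ∈ ℝ^n : a'·x ≤ b'}. If X_< ≠ ∅, then X_< ⊆ Y_≤ if and only if X_≤ ⊆ Y_≤. -/
/-!
Every point of `X_≤` is a limit of points of `X_<`: move it slightly along the segment towards
a point of `X_<`, which stays in the convex set `{x ≥ l}` and makes `a·x` strictly negative.
Since `Y_≤` is closed, containing `X_<` therefore forces containing `X_≤`.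
-/

open Matrix

section

variable {𝕜 E β : Type*} [Semiring 𝕜] [PartialOrder 𝕜] [AddCommMonoid E] [Module 𝕜 E]
  [AddCommMonoid β] [PartialOrder β] [IsOrderedCancelAddMonoid β] [Module 𝕜 β]
  [PosSMulStrictMono 𝕜 β] {s : Set E} {g : E → β} {r : β} {x₀ x : E}

theorem ConvexOn.openSegment_subset_sublevel_lt (hg : ConvexOn 𝕜 s g) (hx₀ : x₀ ∈ s)
    (hgx₀ : g x₀ < r) (hx : x ∈ s) (hgx : g x ≤ r) :
    openSegment 𝕜 x₀ x ⊆ {y ∈ s | g y < r} := by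
  rintro _ ⟨a, b, ha, hb, hab, rfl⟩
  refine ⟨hg.1 hx₀ hx ha.le hb.le hab, ?_⟩
  calc g (a • x₀ + b • x) ≤ a • g x₀ + b • g x := hg.2 hx₀ hx ha.le hb.le hab
    _ < a • r + b • r :=
      add_lt_add_of_lt_of_le (smul_lt_smul_of_pos_left hgx₀ ha)
        (smul_le_smul_of_nonneg_left hgx hb.le)
    _ = r := Convex.combo_self hab r

end

section

variable {𝕜 E β : Type*} [Field 𝕜] [LinearOrder 𝕜] [IsStrictOrderedRing 𝕜]
  [TopologicalSpace 𝕜] [OrderTopology 𝕜]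
  [AddCommGroup E] [Module 𝕜 E] [TopologicalSpace E] [ContinuousAdd E] [ContinuousSMul 𝕜 E]
  [AddCommMonoid β] [PartialOrder β] [IsOrderedCancelAddMonoid β] [Module 𝕜 β]
  [PosSMulStrictMono 𝕜 β] {s : Set E} {g : E → β} {r : β} {x₀ : E}

theorem ConvexOn.sublevel_le_subset_closure_sublevel_lt (hg : ConvexOn 𝕜 s g) (hx₀ : x₀ ∈ s)
    (hgx₀ : g x₀ < r) : {x ∈ s | g x ≤ r} ⊆ closure {x ∈ s | g x < r} := fun x hx =>
  closure_mono (hg.openSegment_subset_sublevel_lt hx₀ hgx₀ hx.1 hx.2)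
    (segment_subset_closure_openSegment (right_mem_segment 𝕜 x₀ x))

end

theorem strict_subset_iff_le_subset_general
    {n : ℕ} (a a' : Fin n → ℝ) (b' : ℝ) (l : Fin n → ℝ)
    (hX : ∃ x : Fin n → ℝ, l ≤ x ∧ a ⬝ᵥ x < 0) :
    ({x : Fin n → ℝ | l ≤ x ∧ a ⬝ᵥ x < 0} ⊆ {x : Fin n → ℝ | a' ⬝ᵥ x ≤ b'} ↔
      {x : Fin n → ℝ | l ≤ x ∧ a ⬝ᵥ x ≤ 0} ⊆ {x : Fin n → ℝ | a' ⬝ᵥ x ≤ b'}) := by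
  refine ⟨fun h => ?_, fun h x hx => h ⟨hx.1, hx.2.le⟩⟩
  obtain ⟨x₀, hx₀, hax₀⟩ := hX
  have hconv : ConvexOn ℝ (Set.Ici l) (a ⬝ᵥ ·) :=
    (dotProductBilin ℝ ℝ a).convexOn (convex_Ici l)
  have hY : IsClosed {x : Fin n → ℝ | a' ⬝ᵥ x ≤ b'} := isClosed_le (by fun_prop) continuous_const
  calc {x | l ≤ x ∧ a ⬝ᵥ x ≤ 0}
      ⊆ closure {x | l ≤ x ∧ a ⬝ᵥ x < 0} :=
        hconv.sublevel_le_subset_closure_sublevel_lt hx₀ hax₀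
    _ ⊆ {x | a' ⬝ᵥ x ≤ b'} := hY.closure_subset_iff.mpr h

/-- If `X_< = {x : x ≥ l ∧ a·x < 0}` is nonempty (with `l ≥ 0`), then
`X_< ⊆ Y_≤` iff `X_≤ ⊆ Y_≤`, where `X_≤ = {x : x ≥ l ∧ a·x ≤ 0}` and
`Y_≤ = {x : a'·x ≤ b'}`. -/
theorem strict_subset_iff_le_subset
    {n : ℕ} (a a' : Fin n → ℝ) (b' : ℝ) (l : Fin n → ℝ) (hl : 0 ≤ l)
    (hX : ∃ x : Fin n → ℝ, l ≤ x ∧ a ⬝ᵥ x < 0) :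
    ({x : Fin n → ℝ | l ≤ x ∧ a ⬝ᵥ x < 0} ⊆ {x : Fin n → ℝ | a' ⬝ᵥ x ≤ b'} ↔
      {x : Fin n → ℝ | l ≤ x ∧ a ⬝ᵥ x ≤ 0} ⊆ {x : Fin n → ℝ | a' ⬝ᵥ x ≤ b'}) :=
  strict_subset_iff_le_subset_general a a' b' l hX
end

section
/- Let N = (P,T,F) be a continuous Petri net, u ∈ T, and a, b ∈ ℝ^P. Define the atomic proposition φ_< over pairs of markings by φ_<(m,m') :⟺ a·m < b·m'. Then φ_< enables u (i.e., there exist (m,m') ∈ sol(φ_<) and α > 0 with m' ≥ α·pre(u)) if and only if ¬(a ≥ 0) or ¬(b ≤ 0), where the inequalities are componentwise. -/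
open PetriNet

/-! If `a ≥ 0` and `b ≤ 0`, then `a·m ≥ 0 ≥ b·m'` for all nonnegative markings. Conversely, a
negative coefficient of `a` makes `a·m` arbitrarily small while `m' = pre(u)` stays fixed, and a
positive coefficient of `b` makes `b·m'` arbitrarily large for `m = 0` and `m' ≥ pre(u)`. -/

theorem PetriNet.pre_nonneg {P T : Type*} (N : PetriNet P T) (t : T) : 0 ≤ N.pre t :=
  fun p => Nat.cast_nonneg (N.Fminus p t)

theorem exists_nonneg_dotProduct_lt {ι 𝕜 : Type*} [Fintype ι] [Field 𝕜] [LinearOrder 𝕜]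
    [IsStrictOrderedRing 𝕜] {a : ι → 𝕜} (ha : ¬ 0 ≤ a) (c : 𝕜) :
    ∃ x, 0 ≤ x ∧ a ⬝ᵥ x < c := by
  classical
  obtain ⟨p, hp⟩ : ∃ p, a p < 0 := by simpa [Pi.le_def] using ha
  set t := (|c| + 1) / -a p
  have ht : 0 ≤ t := div_nonneg (by positivity) (neg_nonneg.mpr hp.le)
  refine ⟨Pi.single p t, Pi.single_nonneg.mpr ht, ?_⟩
  have hat : a p * t = -(|c| + 1) := by
    rw [mul_div_assoc', div_eq_iff (neg_ne_zero.mpr hp.ne)]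
    ring
  rw [dotProduct_single, hat]
  linarith [neg_abs_le c]

/-- The atomic proposition `φ_<(m, m') :⟺ a·m < b·m'` enables a transition `u`
(i.e. some solution `(m, m')` has `m' ≥ α·pre(u)` for some `α > 0`) iff
`¬(a ≥ 0)` or `¬(b ≤ 0)`. -/
theorem lt_atom_enables_iff
    {P T : Type*} [Fintype P]
    (N : PetriNet P T) (u : T) (a b : P → ℝ) :
    (∃ m m' : P → ℝ, 0 ≤ m ∧ 0 ≤ m' ∧
        (∑ p, a p * m p) < (∑ p, b p * m' p) ∧
        ∃ α : ℝ, 0 < α ∧ ∀ p, α * N.pre u p ≤ m' p) ↔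
      (¬ 0 ≤ a ∨ ¬ b ≤ 0) := by
  constructor
  · rintro ⟨m, m', hm, hm', hlt, -⟩
    by_contra! hab
    change a ⬝ᵥ m < b ⬝ᵥ m' at hlt
    have ham : 0 ≤ a ⬝ᵥ m := dotProduct_nonneg_of_nonneg hab.1 hm
    have hbm' : b ⬝ᵥ m' ≤ 0 ⬝ᵥ m' := dotProduct_le_dotProduct_of_nonneg_right hab.2 hm'
    rw [zero_dotProduct] at hbm'
    linarith
  · rintro (ha | hb)
    · obtain ⟨m, hm, hlt⟩ := exists_nonneg_dotProduct_lt ha (b ⬝ᵥ N.pre u)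
      exact ⟨m, N.pre u, hm, N.pre_nonneg u, hlt, 1, one_pos, fun p => (one_mul _).le⟩
    · obtain ⟨x, hx, hlt⟩ :=
        exists_nonneg_dotProduct_lt (a := -b) (by rwa [neg_nonneg]) (b ⬝ᵥ N.pre u)
      refine ⟨0, N.pre u + x, le_rfl, add_nonneg (N.pre_nonneg u) hx, ?_, 1, one_pos,
        fun p => by simpa using hx p⟩
      change a ⬝ᵥ 0 < b ⬝ᵥ (N.pre u + x)
      rw [neg_dotProduct] at hlt
      rw [dotProduct_zero, dotProduct_add]
      linarith
end

section
/- Let N = (P,T,F) be a continuous Petri net, u ∈ T, and a, b ∈ ℝ^P. Define the atomic proposition φ_≤ over pairs of markings by φ_≤(m,m') :⟺ a·m ≤ b·m'. Then φ_≤ enables u (i.e., there exist (m,m') ∈ sol(φ_≤) and α > 0 with m' ≥ α·pre(u)) if and only if b·pre(u) ≥ 0, or both b·pre(u) < 0 and ¬(a ≥ 0 ∧ −b ≥ 0), where the vector inequalities are componentwise. -/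
open PetriNet

/-- The atomic proposition `φ_≤(m, m') :⟺ a·m ≤ b·m'` enables a transition `u`
(i.e. some solution `(m, m')` has `m' ≥ α·pre(u)` for some `α > 0`) iff
`b·pre(u) ≥ 0`, or `b·pre(u) < 0` and `¬(a ≥ 0 ∧ -b ≥ 0)`. -/
theorem le_atom_enables_iff
    {P T : Type*} [Fintype P]
    (N : PetriNet P T) (u : T) (a b : P → ℝ) :
    (∃ m m' : P → ℝ, 0 ≤ m ∧ 0 ≤ m' ∧
        (∑ p, a p * m p) ≤ (∑ p, b p * m' p) ∧
        ∃ α : ℝ, 0 < α ∧ ∀ p, α * N.pre u p ≤ m' p) ↔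
      (0 ≤ ∑ p, b p * N.pre u p ∨
        ((∑ p, b p * N.pre u p) < 0 ∧ ¬ (0 ≤ a ∧ 0 ≤ -b))) := by
  classical
  constructor
  · rintro ⟨m, m', hm, hm', hle, α, hα, hpre⟩
    by_cases h : 0 ≤ ∑ p, b p * N.pre u p
    · exact Or.inl h
    · push_neg at h
      refine Or.inr ⟨h, ?_⟩
      rintro ⟨ha, hb⟩
      have h1 : 0 ≤ ∑ p, a p * m p :=
        Finset.sum_nonneg fun p _ => mul_nonneg (ha p) (hm p)
      have h2 : ∑ p, b p * m' p ≤ α * ∑ p, b p * N.pre u p := by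
        rw [Finset.mul_sum]
        refine Finset.sum_le_sum fun p _ => ?_
        have hbp : b p ≤ 0 := by have := hb p; simp at this; linarith
        calc b p * m' p ≤ b p * (α * N.pre u p) :=
              mul_le_mul_of_nonpos_left (hpre p) hbp
          _ = α * (b p * N.pre u p) := by ring
      have h3 : α * ∑ p, b p * N.pre u p < 0 := mul_neg_of_pos_of_neg hα h
      linarith
  · rintro (h | ⟨h, hnot⟩)
    · exact ⟨0, N.pre u, le_refl 0, fun p => Nat.cast_nonneg _, by simpa using h,
        1, one_pos, fun p => by simp⟩
    · simp only [Pi.le_def, Pi.zero_apply, Pi.neg_apply, not_and_or, not_forall,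
        not_le] at hnot
      set S := ∑ p, b p * N.pre u p with hS
      rcases hnot with ⟨p, hap⟩ | ⟨p, hbp⟩
      · -- a p < 0 : make a·m very negative
        have hap' : a p ≠ 0 := ne_of_lt hap
        refine ⟨fun q => if q = p then S / a p else 0, N.pre u, ?_, ?_, ?_, 1, one_pos, ?_⟩
        · intro q
          simp only [Pi.zero_apply]
          split
          · exact le_of_lt (div_pos_iff.2 (Or.inr ⟨h, hap⟩))
          · exact le_refl 0
        · exact fun q => Nat.cast_nonneg _
        · have : ∑ q, a q * (if q = p then S / a p else 0) = a p * (S / a p) := by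
            rw [Finset.sum_eq_single p]
            · simp
            · intro q _ hq; simp [hq]
            · intro hq; exact absurd (Finset.mem_univ p) hq
          rw [this, mul_comm, div_mul_cancel₀ _ hap']
        · intro q; simp
      · -- b p > 0 : add mass on p to m'
        have hbp' : (0:ℝ) < b p := by linarith
        have hbne : b p ≠ 0 := ne_of_gt hbp'
        have hc : 0 ≤ -S / b p := le_of_lt (div_pos (by linarith) hbp')
        refine ⟨0, fun q => N.pre u q + (if q = p then -S / b p else 0), le_refl 0, ?_, ?_, 1, one_pos, ?_⟩
        · intro q
          simp only [Pi.zero_apply]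
          have : (0:ℝ) ≤ N.pre u q := Nat.cast_nonneg _
          split <;> [linarith; simpa using this]
        · have key : ∑ q, b q * (N.pre u q + (if q = p then -S / b p else 0))
              = S + b p * (-S / b p) := by
            have e1 : ∀ q, b q * (N.pre u q + (if q = p then -S / b p else 0))
                = b q * N.pre u q + b q * (if q = p then -S / b p else 0) :=
              fun q => by ring
            simp only [e1, Finset.sum_add_distrib]
            congr 1
            rw [Finset.sum_eq_single p]
            · simp
            · intro q _ hq; simp [hq]
            · intro hq; exact absurd (Finset.mem_univ p) hq
          rw [key, mul_comm, div_mul_cancel₀ _ hbne]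
          simp
        · intro q
          have : (0:ℝ) ≤ (if q = p then -S / b p else 0) := by
            split; exacts [hc, le_refl 0]
          simp only [one_mul]
          linarith
end
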